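/- arXiv:math/0209409 — 4 statements merged into one kernel-verified Lean document; each statement's English description precedes it below -/
import Mathlib

section
/- Let δ¹, δ² ∈ Δ₊ be positive roots with δ¹ ≤ δ² and δ¹ ≠ δ². Then there exists a simple root α ∈ C(δ² − δ¹) such that δ² − α is a positive root or δ¹ + α is a positive root. -/
open scoped RealInnerProductSpace
open scoped Classical

/-- A reduced crystallographic root system `roots` spanning a real inner product
space `V`, with a chosen set `pos` of positive roots, the corresponding base
`simple` of simple roots, and the coefficient function `coeff`, where
`coeff ξ α = c_α(ξ)` is the coefficient of the simple root `α` in the unique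
expression `ξ = ∑_{α ∈ simple} c_α(ξ) • α`. -/
structure RootSystemData (V : Type*) [NormedAddCommGroup V] [InnerProductSpace ℝ V] where
  roots : Finset V
  pos : Finset V
  simple : Finset V
  coeff : V → V → ℝ
  pos_subset : pos ⊆ roots
  simple_subset : simple ⊆ pos
  root_ne_zero : ∀ δ ∈ roots, δ ≠ (0 : V)
  neg_mem : ∀ δ ∈ roots, -δ ∈ roots
  pos_or_neg : ∀ δ ∈ roots, δ ∈ pos ∨ -δ ∈ pos
  pos_neg_not : ∀ δ ∈ pos, -δ ∉ pos
  reduced : ∀ δ ∈ roots, ∀ t : ℝ, t • δ ∈ roots → t = 1 ∨ t = -1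
  crystallographic : ∀ δ ∈ roots, ∀ ε ∈ roots, ∃ n : ℤ, 2 * ⟪δ, ε⟫ / ⟪ε, ε⟫ = (n : ℝ)
  reflect_mem : ∀ δ ∈ roots, ∀ ε ∈ roots, δ - (2 * ⟪δ, ε⟫ / ⟪ε, ε⟫) • ε ∈ roots
  span_eq_top : Submodule.span ℝ (simple : Set V) = ⊤
  linearIndependent : LinearIndependent ℝ (fun α : simple => (α : V))
  coeff_spec : ∀ ξ : V, ξ = ∑ α ∈ simple, coeff ξ α • α
  pos_coeff_nonneg : ∀ δ ∈ pos, ∀ α ∈ simple, 0 ≤ coeff δ α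

namespace RootSystemData

variable {V : Type*} [NormedAddCommGroup V] [InnerProductSpace ℝ V]

/-- The support `C(ξ)` of `ξ`: the set of simple roots with nonzero coefficient in `ξ`. -/
noncomputable def support (R : RootSystemData V) (ξ : V) : Finset V :=
  R.simple.filter fun α => R.coeff ξ α ≠ 0

/-- The coefficientwise partial order: `x ≤ y` iff `c_α(x) ≤ c_α(y)` for all simple `α`. -/
def cle (R : RootSystemData V) (x y : V) : Prop :=
  ∀ α ∈ R.simple, R.coeff x α ≤ R.coeff y α

/-- An `(A,B)`-root: a positive root whose support lies in `A ∪ B` and which has a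
strictly positive coefficient at some element of `A`. -/
def IsABRoot (R : RootSystemData V) (A B : Finset V) (δ : V) : Prop :=
  δ ∈ R.pos ∧ R.support δ ⊆ A ∪ B ∧ ∃ α₀ ∈ A, 0 < R.coeff δ α₀

/-- A significant `(A,B)`-root. -/
def IsSignificant (R : RootSystemData V) (A B : Finset V) (δ : V) : Prop :=
  R.IsABRoot A B δ ∧ ∃ σ : V, R.IsABRoot A B σ ∧ R.cle σ δ ∧
    (∑ β ∈ B, R.coeff σ β * ⟪β, β⟫) ≤ (∑ α ∈ A, R.coeff σ α * ⟪α, α⟫) ∧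
    (∀ x ∈ R.support (δ - σ), ∀ y ∈ R.support (δ - σ), ‖x‖ = ‖y‖) ∧
    (∀ x ∈ R.support (δ - σ), ‖x‖ ≤ ‖σ‖)

/-- `ℓ(A,B)`, the number of significant `(A,B)`-roots. -/
noncomputable def ell (R : RootSystemData V) (A B : Finset V) : ℕ :=
  (R.pos.filter fun δ => R.IsSignificant A B δ).card

/-- `γ`, the half-sum of the positive roots. -/
noncomputable def gamma (R : RootSystemData V) : V :=
  (2 : ℝ)⁻¹ • ∑ δ ∈ R.pos, δ

/-- A weight: `2(β,α)/(α,α) ∈ ℤ` for all roots `α`. -/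
def IsWeight (R : RootSystemData V) (β : V) : Prop :=
  ∀ δ ∈ R.roots, ∃ n : ℤ, 2 * ⟪β, δ⟫ / ⟪δ, δ⟫ = (n : ℝ)

/-- A regular weight: not orthogonal to any positive root. -/
def IsRegular (R : RootSystemData V) (lam : V) : Prop :=
  ∀ δ ∈ R.pos, ⟪lam, δ⟫ ≠ 0

end RootSystemData



section Aux

variable {V : Type*} [NormedAddCommGroup V] [InnerProductSpace ℝ V] (R : RootSystemData V)

lemma inner_self_pos' (x : V) (hx : x ≠ 0) : (0:ℝ) < ⟪x, x⟫ :=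
  lt_of_le_of_ne real_inner_self_nonneg (Ne.symm (inner_self_ne_zero.mpr hx))

lemma coeff_unique (c : V → ℝ) (ξ : V) (h : ∑ α ∈ R.simple, c α • α = ξ) :
    ∀ α ∈ R.simple, c α = R.coeff ξ α := by
  intro α hα
  have h2 := R.coeff_spec ξ
  have hz : ∑ β ∈ R.simple, (c β - R.coeff ξ β) • β = 0 := by
    simp only [sub_smul, Finset.sum_sub_distrib, h, ← h2, sub_self]
  have hli := R.linearIndependent
  rw [Fintype.linearIndependent_iff] at hli
  have hz' : ∑ i : R.simple, (c (i : V) - R.coeff ξ (i : V)) • (i : V) = 0 := by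
    rw [Finset.sum_coe_sort R.simple (fun β => (c β - R.coeff ξ β) • β)]
    exact hz
  have := hli (fun i => c (i : V) - R.coeff ξ (i : V)) hz' ⟨α, hα⟩
  simpa using sub_eq_zero.mp this

lemma coeff_sub (x y : V) (α : V) (hα : α ∈ R.simple) :
    R.coeff (x - y) α = R.coeff x α - R.coeff y α := by
  refine (coeff_unique R (fun β => R.coeff x β - R.coeff y β) (x - y) ?_ α hα).symm
  simp only [sub_smul, Finset.sum_sub_distrib, ← R.coeff_spec x, ← R.coeff_spec y]

lemma coeff_add (x y : V) (α : V) (hα : α ∈ R.simple) :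
    R.coeff (x + y) α = R.coeff x α + R.coeff y α := by
  refine (coeff_unique R (fun β => R.coeff x β + R.coeff y β) (x + y) ?_ α hα).symm
  simp only [add_smul, Finset.sum_add_distrib, ← R.coeff_spec x, ← R.coeff_spec y]

lemma coeff_simple (α : V) (hα : α ∈ R.simple) (β : V) (hβ : β ∈ R.simple) :
    R.coeff α β = if β = α then 1 else 0 := by
  refine (coeff_unique R (fun β => if β = α then (1:ℝ) else 0) α ?_ β hβ).symm
  rw [Finset.sum_congr rfl (fun x _ => by rw [ite_smul, one_smul, zero_smul]),
    Finset.sum_ite_eq' R.simple α (fun x => x)]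
  simp [hα]

/-- If a positive root is a scalar multiple of a simple root, it equals it. -/
lemma eq_simple_of_smul (α : V) (hα : α ∈ R.simple) (δ : V) (hδ : δ ∈ R.pos)
    (c : ℝ) (hc : δ = c • α) : δ = α := by
  have hαr : α ∈ R.roots := R.pos_subset (R.simple_subset hα)
  have hδr : δ ∈ R.roots := R.pos_subset hδ
  have := R.reduced α hαr c (hc ▸ hδr)
  have hcoeff : R.coeff δ α = c := by
    have h1 := coeff_unique R (fun β => c * (if β = α then 1 else 0)) δ ?_ α hα
    · simpa using h1.symm
    · rw [Finset.sum_congr rfl (fun x _ => by rw [mul_smul, ite_smul, one_smul, zero_smul]),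
        ← Finset.smul_sum,
        Finset.sum_ite_eq' R.simple α (fun x => x)]
      simp [hα, hc]
  have hnn := R.pos_coeff_nonneg δ hδ α hα
  rcases this with h | h
  · rw [hc, h, one_smul]
  · exfalso; rw [hcoeff, h] at hnn; linarith

/-- Standard fact: if two roots have positive inner product and are not equal
or opposite, their difference is a root. -/
lemma sub_mem_roots (δ ε : V) (hδ : δ ∈ R.roots) (hε : ε ∈ R.roots)
    (hip : 0 < ⟪δ, ε⟫) (hne : δ ≠ ε) (hne' : δ ≠ -ε) : δ - ε ∈ R.roots := by
  have hδ0 := R.root_ne_zero δ hδ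
  have hε0 := R.root_ne_zero ε hε
  have hδδ : 0 < ⟪δ, δ⟫ := inner_self_pos' δ hδ0
  have hεε : 0 < ⟪ε, ε⟫ := inner_self_pos' ε hε0
  obtain ⟨n, hn⟩ := R.crystallographic δ hδ ε hε
  obtain ⟨m, hm⟩ := R.crystallographic ε hε δ hδ
  have hn1 : 1 ≤ n := by
    have h0 : (0:ℝ) < n := by rw [← hn]; exact div_pos (by linarith) hεε
    have : 0 < n := by exact_mod_cast h0
    omega
  have hm1 : 1 ≤ m := by
    have h0 : (0:ℝ) < m := by
      rw [← hm, real_inner_comm δ ε]; exact div_pos (by linarith) hδδ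
    have : 0 < m := by exact_mod_cast h0
    omega
  by_cases hn2 : n = 1
  · have := R.reflect_mem δ hδ ε hε
    rw [hn, hn2] at this
    simpa using this
  by_cases hm2 : m = 1
  · have := R.reflect_mem ε hε δ hδ
    rw [hm, hm2] at this
    have := R.neg_mem _ this
    simpa [neg_sub] using this
  exfalso
  have hn2' : (2:ℝ) ≤ n := by exact_mod_cast (by omega : (2:ℤ) ≤ n)
  have hm2' : (2:ℝ) ≤ m := by exact_mod_cast (by omega : (2:ℤ) ≤ m)
  -- from hn : 2⟪δ,ε⟫/⟪ε,ε⟫ = n ≥ 2, get ⟪δ,ε⟫ ≥ ⟪ε,ε⟫, similarly ⟪δ,ε⟫ ≥ ⟪δ,δ⟫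
  have h1 : ⟪ε, ε⟫ ≤ ⟪δ, ε⟫ := by
    have := hn2'.trans hn.ge
    rw [le_div_iff₀ hεε] at this
    linarith
  have h2 : ⟪δ, δ⟫ ≤ ⟪δ, ε⟫ := by
    have := hm2'.trans hm.ge
    rw [real_inner_comm δ ε, le_div_iff₀ hδδ] at this
    linarith
  have hcs : ⟪δ, ε⟫ ≤ ‖δ‖ * ‖ε‖ := real_inner_le_norm δ ε
  have hsq : (‖δ‖ * ‖ε‖) * (‖δ‖ * ‖ε‖) ≤ ⟪δ, ε⟫ * ⟪δ, ε⟫ := by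
    have e1 : ⟪δ, δ⟫ = ‖δ‖ * ‖δ‖ := real_inner_self_eq_norm_mul_norm δ
    have e2 : ⟪ε, ε⟫ = ‖ε‖ * ‖ε‖ := real_inner_self_eq_norm_mul_norm ε
    nlinarith
  have heq : ⟪δ, ε⟫ = ‖δ‖ * ‖ε‖ := le_antisymm hcs (by nlinarith [norm_nonneg δ, norm_nonneg ε])
  rw [inner_eq_norm_mul_iff_real] at heq
  -- ‖ε‖ • δ = ‖δ‖ • ε
  have hεn : ‖ε‖ ≠ 0 := norm_ne_zero_iff.mpr hε0
  have hδparallel : δ = (‖δ‖ / ‖ε‖) • ε := by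
    rw [div_eq_mul_inv, mul_comm, mul_smul, ← heq, smul_smul, inv_mul_cancel₀ hεn, one_smul]
  have := R.reduced ε hε (‖δ‖ / ‖ε‖) (hδparallel ▸ hδ)
  have hpos : 0 < ‖δ‖ / ‖ε‖ := div_pos (norm_pos_iff.mpr hδ0) (norm_pos_iff.mpr hε0)
  rcases this with h | h
  · rw [h, one_smul] at hδparallel; exact hne hδparallel
  · rw [h] at hpos; linarith

/-- A root of the form `δ - α` with `δ` positive and `α` simple, `δ ≠ α`, is positive. -/
lemma sub_simple_pos (δ α : V) (hδ : δ ∈ R.pos) (hα : α ∈ R.simple) (hδα : δ ≠ α)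
    (hroot : δ - α ∈ R.roots) : δ - α ∈ R.pos := by
  -- find β ∈ simple, β ≠ α, with coeff δ β > 0
  have hex : ∃ β ∈ R.simple, β ≠ α ∧ 0 < R.coeff δ β := by
    by_contra hcon
    push_neg at hcon
    have hall : ∀ β ∈ R.simple, β ≠ α → R.coeff δ β = 0 := by
      intro β hβ hβα
      exact le_antisymm (hcon β hβ hβα) (R.pos_coeff_nonneg δ hδ β hβ)
    have hδeq : δ = R.coeff δ α • α := by
      conv_lhs => rw [R.coeff_spec δ]
      rw [Finset.sum_eq_single α]
      · intro b hb hba; rw [hall b hb hba, zero_smul]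
      · intro h; exact absurd hα h
    exact hδα (eq_simple_of_smul R α hα δ hδ _ hδeq)
  obtain ⟨β, hβ, hβα, hβpos⟩ := hex
  rcases R.pos_or_neg _ hroot with h | h
  · exact h
  · exfalso
    have := R.pos_coeff_nonneg _ h β hβ
    rw [neg_sub, coeff_sub R α δ β hβ, coeff_simple R α hα β hβ, if_neg hβα] at this
    linarith

lemma add_simple_pos (δ α : V) (hδ : δ ∈ R.pos) (hα : α ∈ R.simple)
    (hroot : δ + α ∈ R.roots) : δ + α ∈ R.pos := by
  rcases R.pos_or_neg _ hroot with h | h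
  · exact h
  · exfalso
    have := R.pos_coeff_nonneg _ h α hα
    have hδα : R.coeff (δ + α) α = R.coeff δ α + 1 := by
      rw [coeff_add R δ α α hα, coeff_simple R α hα α hα, if_pos rfl]
    have h2 : R.coeff (-(δ + α)) α = -(R.coeff δ α + 1) := by
      have : R.coeff (0 - (δ + α)) α = R.coeff 0 α - R.coeff (δ + α) α :=
        coeff_sub R 0 (δ + α) α hα
      rw [zero_sub] at this
      have h0 : R.coeff 0 α = 0 := by
        have := coeff_unique R (fun _ => (0:ℝ)) 0 (by simp) α hα
        simpa using this.symm
      rw [this, h0, hδα, zero_sub]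
    rw [h2] at this
    have := R.pos_coeff_nonneg δ hδ α hα
    linarith

end Aux

/-- If `δ¹ ≤ δ²` are distinct positive roots, then some simple root `α` in the support
`C(δ² − δ¹)` satisfies `δ² − α ∈ Δ₊` or `δ¹ + α ∈ Δ₊`. -/
theorem exists_simple_root_step
    {V : Type*} [NormedAddCommGroup V] [InnerProductSpace ℝ V]
    (R : RootSystemData V)
    (δ₁ δ₂ : V) (h1 : δ₁ ∈ R.pos) (h2 : δ₂ ∈ R.pos) (hle : R.cle δ₁ δ₂)
    (hne : δ₁ ≠ δ₂) :
    ∃ α ∈ R.support (δ₂ - δ₁), δ₂ - α ∈ R.pos ∨ δ₁ + α ∈ R.pos := by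
  set ξ := δ₂ - δ₁ with hξ
  have hξ0 : ξ ≠ 0 := sub_ne_zero.mpr (Ne.symm hne)
  have hpos : 0 < ⟪ξ, ξ⟫ := inner_self_pos' ξ hξ0
  have hsum : ⟪ξ, ξ⟫ = ∑ α ∈ R.simple, R.coeff ξ α * ⟪α, ξ⟫ := by
    have h0 : (⟪ξ, ξ⟫ : ℝ) = ⟪∑ α ∈ R.simple, R.coeff ξ α • α, ξ⟫ :=
      congrArg (fun z => (⟪z, ξ⟫ : ℝ)) (R.coeff_spec ξ)
    rw [h0, sum_inner]
    exact Finset.sum_congr rfl fun α _ => real_inner_smul_left α ξ (R.coeff ξ α)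
  have hex : ∃ α ∈ R.simple, 0 < R.coeff ξ α * ⟪α, ξ⟫ := by
    by_contra hcon
    push_neg at hcon
    have := Finset.sum_nonpos hcon
    rw [← hsum] at this
    linarith
  obtain ⟨α, hα, hαpos⟩ := hex
  have hcnn : 0 ≤ R.coeff ξ α := by
    rw [hξ, coeff_sub R δ₂ δ₁ α hα]
    have := hle α hα
    linarith
  have hcpos : 0 < R.coeff ξ α := by
    rcases lt_or_eq_of_le hcnn with h | h
    · exact h
    · exfalso; rw [← h, zero_mul] at hαpos; exact lt_irrefl 0 hαpos
  have hip : 0 < ⟪α, ξ⟫ := by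
    by_contra h
    push_neg at h
    nlinarith
  have hαsupp : α ∈ R.support ξ := by
    rw [RootSystemData.support, Finset.mem_filter]
    exact ⟨hα, ne_of_gt hcpos⟩
  refine ⟨α, hαsupp, ?_⟩
  have hαpos' : α ∈ R.pos := R.simple_subset hα
  have hαr : α ∈ R.roots := R.pos_subset hαpos'
  have hδ₁r : δ₁ ∈ R.roots := R.pos_subset h1
  have hδ₂r : δ₂ ∈ R.roots := R.pos_subset h2
  rw [hξ, inner_sub_right] at hip
  rcases lt_or_ge 0 (⟪α, δ₂⟫) with hc | hc
  · -- δ₂ - α is a root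
    left
    have hne2 : δ₂ ≠ α := by
      intro heq
      -- then δ₁ is a multiple of α, hence equals α = δ₂
      apply hne
      have hall : ∀ β ∈ R.simple, β ≠ α → R.coeff δ₁ β = 0 := by
        intro β hβ hβα
        have hle' := hle β hβ
        rw [heq, coeff_simple R α hα β hβ, if_neg hβα] at hle'
        exact le_antisymm hle' (R.pos_coeff_nonneg δ₁ h1 β hβ)
      have hδeq : δ₁ = R.coeff δ₁ α • α := by
        conv_lhs => rw [R.coeff_spec δ₁]
        rw [Finset.sum_eq_single α]
        · intro b hb hba; rw [hall b hb hba, zero_smul]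
        · intro h; exact absurd hα h
      rw [heq]
      exact eq_simple_of_smul R α hα δ₁ h1 _ hδeq
    have hne2' : δ₂ ≠ -α := by
      intro heq
      have : -δ₂ = α := by rw [heq, neg_neg]
      exact R.pos_neg_not δ₂ h2 (this ▸ hαpos')
    have hroot : δ₂ - α ∈ R.roots :=
      sub_mem_roots R δ₂ α hδ₂r hαr (by rw [real_inner_comm]; exact hc) hne2 hne2'
    exact sub_simple_pos R δ₂ α h2 hα hne2 hroot
  · -- ⟪α, δ₁⟫ < 0, so δ₁ + α is a root
    right
    have hd1 : ⟪α, δ₁⟫ < 0 := by linarith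
    have hnδ₁r : -δ₁ ∈ R.roots := R.neg_mem δ₁ hδ₁r
    have hip' : 0 < ⟪-δ₁, α⟫ := by
      rw [inner_neg_left, real_inner_comm]; linarith
    have hne3 : -δ₁ ≠ α := by
      intro heq
      have : -α = δ₁ := by rw [← heq, neg_neg]
      exact R.pos_neg_not α hαpos' (this ▸ h1)
    have hne3' : -δ₁ ≠ -α := by
      intro heq
      have hδα : δ₁ = α := neg_injective heq
      rw [hδα] at hd1
      have := inner_self_pos' α (R.root_ne_zero α hαr)
      linarith
    have hroot : -δ₁ - α ∈ R.roots := sub_mem_roots R (-δ₁) α hnδ₁r hαr hip' hne3 hne3'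
    have hroot' : δ₁ + α ∈ R.roots := by
      have := R.neg_mem _ hroot
      simpa [neg_sub, sub_neg_eq_add, add_comm] using this
    exact add_simple_pos R δ₁ α h1 hα hroot'
end

section
/- Let 𝔤₁, …, 𝔤ₙ be finite-dimensional simple complex Lie algebras and let 𝔤 = 𝔤₁ ⊕ … ⊕ 𝔤ₙ be their direct sum. For each i let dᵢ denote the minimal complex dimension of a finite-dimensional 𝔤ᵢ-module on which 𝔤ᵢ acts nontrivially. If M is a finite-dimensional 𝔤-module with dim M < d₁ + … + dₙ, then there exists an index i such that the ideal 𝔤ᵢ ⊆ 𝔤 acts trivially on M (i.e., x·m = 0 for all x in the i-th summand and all m ∈ M). -/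
open scoped DirectSum

/-- The minimal (complex) dimension of a finite-dimensional module over the Lie algebra `L`
on which `L` acts nontrivially. -/
noncomputable def minNontrivialDim (L : Type) [LieRing L] [LieAlgebra ℂ L] : ℕ :=
  sInf {k : ℕ | ∃ (M : Type) (_ : AddCommGroup M) (_ : Module ℂ M)
    (_ : LieRingModule L M) (_ : LieModule ℂ L M),
    FiniteDimensional ℂ M ∧ (∃ (x : L) (m : M), ⁅x, m⁆ ≠ 0) ∧ Module.finrank ℂ M = k}

/-!
We show `∑ dⱼ ≤ dim M`, summed over the summands `𝔤ⱼ` acting nontrivially on `M`, by induction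
on `dim M`. A simple Lie algebra is perfect, so it acts trivially as soon as its action operators
commute: in particular if all their products vanish, and whenever `dim ≤ 1`, whence `dⱼ ≥ 2`.
If `M` has a proper nonzero submodule `N`, a summand acting trivially on `N` and on `M ⧸ N` thus
acts trivially on `M`, and the bounds for `N` and `M ⧸ N` add up.

If `M` is irreducible and `𝔤ᵢ` acts nontrivially, the `𝔤ᵢ`-invariants (a `𝔤`-submodule) vanish.
For a simple `𝔤ᵢ`-submodule `V ⊆ M`, the multiplicity space `E = Hom_{𝔤ᵢ}(V, M)` is a
`𝔤`-module, the other summands acting by post-composition. Then `dᵢ ≤ dim V`, Schur's lemma gives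
`dim V · dim E ≤ dim M`, and each `𝔤ⱼ`, `j ≠ i`, acting nontrivially on `M` acts nontrivially on
`E` (else it kills the image of `V`). By induction `∑_{j ≠ i} dⱼ ≤ dim E`, and `a + b ≤ a b` for
`a, b ≥ 2` concludes.
-/

open Module DirectSum

section SimpleLieAlgebra

attribute [local instance 100] LieRing.ofAssociativeRing

variable {R K : Type*} [CommRing R] [LieRing K] [LieAlgebra R K] [LieAlgebra.IsSimple R K]

theorem LieAlgebra.IsSimple.lieHom_eq_zero_of_lie_eq_zero {L : Type*} [LieRing L]
    [LieAlgebra R L] (ψ : K →ₗ⁅R⁆ L) (h : ∀ x y, ⁅ψ x, ψ y⁆ = 0) : ψ = 0 := by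
  rcases LieAlgebra.IsSimple.eq_bot_or_eq_top ψ.ker with hker | hker
  · refine (LieAlgebra.IsSimple.non_abelian (R := R) (L := K) ⟨fun x y => ?_⟩).elim
    apply ψ.ker_eq_bot.mp hker
    rw [ψ.map_lie, h, map_zero]
  · ext x
    exact ψ.mem_ker.mp (hker ▸ LieSubmodule.mem_top x)

variable {L M : Type*} [LieRing L] [LieAlgebra R L] [AddCommGroup M] [Module R M]
  [LieRingModule L M] [LieModule R L M]

theorem LieAlgebra.IsSimple.lie_eq_zero_of_commute (φ : K →ₗ⁅R⁆ L)
    (h : ∀ x y (m : M), ⁅φ x, ⁅φ y, m⁆⁆ = ⁅φ y, ⁅φ x, m⁆⁆) (x : K) (m : M) : ⁅φ x, m⁆ = 0 := by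
  have hψ := lieHom_eq_zero_of_lie_eq_zero ((LieModule.toEnd R L M).comp φ) fun x y => by
    ext m
    simp [Ring.lie_def, h]
  simpa using LinearMap.congr_fun (LieHom.congr_fun hψ x) m

theorem LieAlgebra.IsSimple.lie_eq_zero_of_lie_mem (φ : K →ₗ⁅R⁆ L) (N : LieSubmodule R L M)
    (hN : ∀ x, ∀ n ∈ N, ⁅φ x, n⁆ = 0) (hM : ∀ x (m : M), ⁅φ x, m⁆ ∈ N) (x : K) (m : M) :
    ⁅φ x, m⁆ = 0 :=
  lie_eq_zero_of_commute φ (fun x y m => by rw [hN x _ (hM y m), hN y _ (hM x m)]) x m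

end SimpleLieAlgebra

theorem LieAlgebra.IsSimple.two_le_finrank {F K W : Type*} [Field F] [LieRing K]
    [LieAlgebra F K] [LieAlgebra.IsSimple F K] [AddCommGroup W] [Module F W] [LieRingModule K W]
    [LieModule F K W] [FiniteDimensional F W] (h : ∃ (x : K) (w : W), ⁅x, w⁆ ≠ 0) :
    2 ≤ finrank F W := by
  obtain ⟨x, w, hxw⟩ := h
  have : Nontrivial W := ⟨_, _, hxw⟩
  by_contra! hlt
  have hone : finrank F W = 1 := by have := finrank_pos (R := F) (M := W); omega
  have hcomm (y z : K) (u : W) : ⁅y, ⁅z, u⁆⁆ = ⁅z, ⁅y, u⁆⁆ := by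
    obtain ⟨a, ha⟩ := (LieModule.toEnd F K W y).existsUnique_eq_smul_id_of_finrank_eq_one hone
    obtain ⟨b, hb⟩ := (LieModule.toEnd F K W z).existsUnique_eq_smul_id_of_finrank_eq_one hone
    have hy := LinearMap.congr_fun ha.1
    have hz := LinearMap.congr_fun hb.1
    simp only [LieModule.toEnd_apply_apply, LinearMap.smul_apply, LinearMap.id_apply] at hy hz
    rw [hy, hz, hy, hz, smul_comm]
  exact hxw (lie_eq_zero_of_commute (LieHom.id : K →ₗ⁅F⁆ K) hcomm x w)

section IrreducibleModule

variable {R L M : Type*} [CommRing R] [LieRing L] [AddCommGroup M] [Module R M]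
  [LieRingModule L M]

theorem LieSubmodule.isIrreducible_of_isAtom {N : LieSubmodule R L M} (hN : IsAtom N) :
    LieModule.IsIrreducible R L N := by
  have : Nontrivial N := (LieSubmodule.nontrivial_iff_ne_bot R L M).mpr hN.1
  refine LieModule.IsIrreducible.mk fun q hq => ?_
  by_contra hq_top
  have hlt := LieSubmodule.map_incl_lt_iff_lt_top.mpr (lt_top_iff_ne_top.mpr hq_top)
  exact hq <| LieSubmodule.map_injective_of_injective Subtype.coe_injective <|
    (hN.2 _ hlt).trans LieSubmodule.map_bot.symm

theorem LieModule.IsIrreducible.injective_of_ne_zero [LieModule.IsIrreducible R L M]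
    {W : Type*} [AddCommGroup W] [Module R W] [LieRingModule L W] {f : M →ₗ⁅R,L⁆ W}
    (hf : f ≠ 0) : Function.Injective f := by
  refine f.ker_eq_bot.mp ((IsSimpleOrder.eq_bot_or_eq_top f.ker).resolve_right fun h => hf ?_)
  ext m
  exact f.mem_ker.mp (h ▸ LieSubmodule.mem_top m)

end IrreducibleModule

theorem LinearMap.exists_ne_zero_apply_eq_smul_apply_of_range_le {k V W : Type*} [Field k]
    [IsAlgClosed k] [AddCommGroup V] [Module k V] [FiniteDimensional k V] [Nontrivial V]
    [AddCommGroup W] [Module k W] {f g : V →ₗ[k] W} (hf : Function.Injective f)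
    (h : range g ≤ range f) : ∃ (c : k) (v : V), v ≠ 0 ∧ g v = c • f v := by
  let e := LinearEquiv.ofInjective f hf
  let u : Module.End k V := e.symm ∘ₗ g.codRestrict (range f) fun v => h ⟨v, rfl⟩
  have hfu (v : V) : f (u v) = g v := congrArg Subtype.val (e.apply_symm_apply ⟨g v, _⟩)
  obtain ⟨c, hc⟩ := Module.End.exists_eigenvalue u
  obtain ⟨v, hv⟩ := hc.exists_hasEigenvector
  refine ⟨c, v, hv.2, ?_⟩
  rw [← hfu, Module.End.mem_eigenspace_iff.mp hv.1, map_smul]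

instance LieModuleHom.instFiniteDimensional {k L V W : Type*} [Field k] [LieRing L]
    [LieAlgebra k L] [AddCommGroup V] [Module k V] [LieRingModule L V] [LieModule k L V]
    [FiniteDimensional k V] [AddCommGroup W] [Module k W] [LieRingModule L W] [LieModule k L W]
    [FiniteDimensional k W] : FiniteDimensional k (V →ₗ⁅k,L⁆ W) :=
  LinearEquiv.finiteDimensional LieModule.maxTrivLinearMapEquivLieModuleHom

section Schur

variable {k L V W : Type*} [Field k] [IsAlgClosed k] [LieRing L] [LieAlgebra k L]
  [AddCommGroup V] [Module k V] [LieRingModule L V] [FiniteDimensional k V]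
  [LieModule.IsIrreducible k L V] [AddCommGroup W] [Module k W] [LieRingModule L W]
  [LieModule k L W]

theorem LieModule.IsIrreducible.exists_eq_smul_of_range_le {f g : V →ₗ⁅k,L⁆ W}
    (hf : Function.Injective f) (h : g.range ≤ f.range) : ∃ c : k, g = c • f := by
  have := LieModule.nontrivial_of_isIrreducible k L V
  obtain ⟨c, v, hv, hgv⟩ :=
    LinearMap.exists_ne_zero_apply_eq_smul_apply_of_range_le (f := (f : V →ₗ[k] W)) hf h
  refine ⟨c, ?_⟩
  have hker : (g - c • f).ker ≠ ⊥ := fun hbot =>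
    hv <| (LieSubmodule.eq_bot_iff _).mp hbot v (by simpa using sub_eq_zero.mpr hgv)
  ext w
  have := (g - c • f).mem_ker.mp
    ((IsSimpleOrder.eq_bot_or_eq_top _).resolve_left hker ▸ LieSubmodule.mem_top w)
  simpa [sub_eq_zero] using this

variable [LieModule k L V] [FiniteDimensional k W]

theorem LieModule.IsIrreducible.finrank_lieModuleHom_le_finrank_quotient_add_one
    {f : V →ₗ⁅k,L⁆ W} (hf : Function.Injective f) :
    finrank k (V →ₗ⁅k,L⁆ W) ≤ finrank k (V →ₗ⁅k,L⁆ W ⧸ f.range) + 1 := by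
  let π := LieSubmodule.Quotient.mk' f.range
  let Φ : (V →ₗ⁅k,L⁆ W) →ₗ[k] (V →ₗ⁅k,L⁆ W ⧸ f.range) :=
    { toFun := π.comp
      map_add' := fun g h => LieModuleHom.ext fun v => map_add π (g v) (h v)
      map_smul' := fun c g => LieModuleHom.ext fun v => map_smul π c (g v) }
  have hker : LinearMap.ker Φ ≤ Submodule.span k {f} := fun g hg => by
    have hrange : g.range ≤ f.range := by
      rintro _ ⟨v, rfl⟩
      exact LieSubmodule.Quotient.mk_eq_zero'.mp (LieModuleHom.congr_fun hg v)
    obtain ⟨c, rfl⟩ := exists_eq_smul_of_range_le hf hrange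
    exact Submodule.smul_mem _ c (Submodule.mem_span_singleton_self f)
  calc finrank k (V →ₗ⁅k,L⁆ W)
      = finrank k (LinearMap.range Φ) + finrank k (LinearMap.ker Φ) :=
        (LinearMap.finrank_range_add_finrank_ker Φ).symm
    _ ≤ finrank k (V →ₗ⁅k,L⁆ W ⧸ f.range) + finrank k (Submodule.span k {f}) :=
        add_le_add (Submodule.finrank_le _) (Submodule.finrank_mono hker)
    _ ≤ _ := by
        gcongr
        simpa using finrank_span_le_card ({f} : Set (V →ₗ⁅k,L⁆ W))

theorem LieModule.IsIrreducible.finrank_mul_finrank_lieModuleHom_le :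
    finrank k V * finrank k (V →ₗ⁅k,L⁆ W) ≤ finrank k W := by
  induction hn : finrank k W using Nat.strong_induction_on generalizing W with
  | _ n ih =>
  rcases subsingleton_or_nontrivial (V →ₗ⁅k,L⁆ W) with _ | _
  · simp [finrank_zero_of_subsingleton]
  obtain ⟨f, hf⟩ := exists_ne (0 : V →ₗ⁅k,L⁆ W)
  have hinj := injective_of_ne_zero hf
  have : Nontrivial V := LieModule.nontrivial_of_isIrreducible k L V
  have hV : 0 < finrank k V := finrank_pos
  have hsplit : finrank k (W ⧸ f.range) + finrank k V = n := by
    rw [← hn, ← LinearMap.finrank_range_of_inj hinj]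
    exact (f.range : Submodule k W).finrank_quotient_add_finrank
  have hQ := ih _ (by omega) (W := W ⧸ f.range) rfl
  have hstep := finrank_lieModuleHom_le_finrank_quotient_add_one hinj
  calc finrank k V * finrank k (V →ₗ⁅k,L⁆ W)
      ≤ finrank k V * (finrank k (V →ₗ⁅k,L⁆ W ⧸ f.range) + 1) := by gcongr
    _ ≤ n := by rw [mul_add_one]; omega

end Schur

section DirectSum

variable {R ι : Type*} [CommRing R] [DecidableEq ι] {L : ι → Type*} [∀ i, LieRing (L i)]
  [∀ i, LieAlgebra R (L i)]

theorem DirectSum.lie_of_left (i : ι) (x : L i) (z : ⨁ j, L j) :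
    ⁅of L i x, z⁆ = of L i ⁅x, z i⁆ := by
  ext j
  rw [bracket_apply]
  obtain rfl | hij := eq_or_ne i j
  · simp only [of_eq_same]
  · rw [of_eq_of_ne _ _ _ hij.symm, of_eq_of_ne _ _ _ hij.symm, zero_lie]

variable (R L) in
def invariantsOfSummand (i : ι) (M : Type*) [AddCommGroup M] [Module R M]
    [LieRingModule (⨁ j, L j) M] [LieModule R (⨁ j, L j) M] : LieSubmodule R (⨁ j, L j) M where
  carrier := {m | ∀ x : L i, ⁅of L i x, m⁆ = 0}
  add_mem' ha hb x := by rw [lie_add, ha x, hb x, add_zero]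
  zero_mem' _ := lie_zero _
  smul_mem' c m hm x := by rw [lie_smul, hm x, smul_zero]
  lie_mem {z m} hm x := by rw [leibniz_lie, hm, lie_zero, add_zero, lie_of_left, hm]

variable {M : Type*} [AddCommGroup M] [Module R M] [LieRingModule (⨁ j, L j) M]
  [LieModule R (⨁ j, L j) M]

@[simp]
theorem mem_invariantsOfSummand {i : ι} {m : M} :
    m ∈ invariantsOfSummand R L i M ↔ ∀ x : L i, ⁅of L i x, m⁆ = 0 :=
  Iff.rfl

theorem invariantsOfSummand_eq_top_iff {i : ι} :
    invariantsOfSummand R L i M = ⊤ ↔ ∀ (x : L i) (m : M), ⁅of L i x, m⁆ = 0 := by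
  rw [eq_top_iff, SetLike.le_def]
  simp only [LieSubmodule.mem_top, mem_invariantsOfSummand, true_implies]
  exact forall_comm

section Multiplicity

variable {i : ι} {V : Type*} [AddCommGroup V] [Module R V] [LieRingModule (L i) V]
  [LieRingModule (L i) M]

theorem toSubmodule_invariantsOfSummand_linearMap_eq_maxTrivSubmodule [LieModule R (L i) V]
    [LieModule R (L i) M] [LieRingModule (⨁ j, L j) V] [LieModule R (⨁ j, L j) V]
    (hV : ∀ (z : ⨁ j, L j) (v : V), ⁅z, v⁆ = ⁅z i, v⁆)
    (hM : ∀ (x : L i) (m : M), ⁅x, m⁆ = ⁅of L i x, m⁆) :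
    (invariantsOfSummand R L i (V →ₗ[R] M)).toSubmodule =
      (LieModule.maxTrivSubmodule R (L i) (V →ₗ[R] M)).toSubmodule := by
  ext f
  simp only [LieSubmodule.mem_toSubmodule, mem_invariantsOfSummand,
    LieModule.mem_maxTrivSubmodule, LinearMap.ext_iff, LieHom.lie_apply, hV, hM, of_eq_same,
    LinearMap.zero_apply]

theorem exists_lie_ne_zero_of_invariantsOfSummand_eq_bot
    (hM : ∀ (x : L i) (m : M), ⁅x, m⁆ = ⁅of L i x, m⁆) {f : V →ₗ⁅R,L i⁆ M} (hf : f ≠ 0)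
    (hi : invariantsOfSummand R L i M = ⊥) : ∃ (x : L i) (v : V), ⁅x, v⁆ ≠ 0 := by
  by_contra! hV
  refine hf (LieModuleHom.ext fun v => (LieSubmodule.eq_bot_iff _).mp hi _ fun x => ?_)
  rw [← hM, ← f.map_lie, hV, map_zero]

end Multiplicity

variable (R L M) in
open Classical in
noncomputable def nontrivialSummands [Fintype ι] : Finset ι :=
  {j | invariantsOfSummand R L j M ≠ ⊤}

variable [Fintype ι]

theorem mem_nontrivialSummands {j : ι} :
    j ∈ nontrivialSummands R L M ↔ invariantsOfSummand R L j M ≠ ⊤ := by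
  simp [nontrivialSummands]

theorem invariantsOfSummand_eq_bot [LieModule.IsIrreducible R (⨁ j, L j) M] {j : ι}
    (hj : j ∈ nontrivialSummands R L M) : invariantsOfSummand R L j M = ⊥ :=
  (IsSimpleOrder.eq_bot_or_eq_top _).resolve_right (mem_nontrivialSummands.mp hj)

theorem nontrivialSummands_subset_union [∀ i, LieAlgebra.IsSimple R (L i)]
    (N : LieSubmodule R (⨁ j, L j) M) :
    nontrivialSummands R L M ⊆ nontrivialSummands R L N ∪ nontrivialSummands R L (M ⧸ N) := by
  intro j hj
  contrapose! hj
  simp only [Finset.mem_union, mem_nontrivialSummands, not_or, not_not,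
    invariantsOfSummand_eq_top_iff] at hj ⊢
  obtain ⟨hN, hQ⟩ := hj
  exact LieAlgebra.IsSimple.lie_eq_zero_of_lie_mem (DirectSum.lieAlgebraOf R ι L j) N
    (fun x n hn => congrArg Subtype.val (hN x ⟨n, hn⟩))
    (fun x m => LieSubmodule.Quotient.mk_eq_zero'.mp (hQ x (LieSubmodule.Quotient.mk m)))

theorem mem_nontrivialSummands_invariantsOfSummand_linearMap {i : ι} {V : Type*}
    [AddCommGroup V] [Module R V] [LieRingModule (L i) V] [LieRingModule (⨁ j, L j) V]
    [LieModule R (⨁ j, L j) V]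
    (hV : ∀ (z : ⨁ j, L j) (v : V), ⁅z, v⁆ = ⁅z i, v⁆) {f : V →ₗ[R] M}
    (hf : f ∈ invariantsOfSummand R L i (V →ₗ[R] M)) (hf0 : f ≠ 0) {j : ι} (hji : j ≠ i)
    (hj : invariantsOfSummand R L j M = ⊥) :
    j ∈ nontrivialSummands R L (invariantsOfSummand R L i (V →ₗ[R] M)) := by
  rw [mem_nontrivialSummands, Ne, invariantsOfSummand_eq_top_iff]
  intro htriv
  refine hf0 (LinearMap.ext fun v => (LieSubmodule.eq_bot_iff _).mp hj _ fun x => ?_)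
  have hfx : ⁅of L j x, f⁆ = 0 := congrArg Subtype.val (htriv x ⟨f, hf⟩)
  simpa [hV, of_eq_of_ne _ _ _ hji.symm] using LinearMap.congr_fun hfx v

end DirectSum

section MinNontrivialDim

variable (K : Type) [LieRing K] [LieAlgebra ℂ K]

theorem minNontrivialDim_le_finrank {W : Type} [AddCommGroup W] [Module ℂ W]
    [LieRingModule K W] [LieModule ℂ K W] [FiniteDimensional ℂ W]
    (h : ∃ (x : K) (w : W), ⁅x, w⁆ ≠ 0) : minNontrivialDim K ≤ finrank ℂ W :=
  Nat.sInf_le ⟨W, inferInstance, inferInstance, inferInstance, inferInstance, ‹_›, h, rfl⟩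

theorem two_le_minNontrivialDim [LieAlgebra.IsSimple ℂ K] [FiniteDimensional ℂ K] :
    2 ≤ minNontrivialDim K := by
  refine le_csInf ⟨finrank ℂ K, K, inferInstance, inferInstance, inferInstance, inferInstance,
    ‹_›, ?_, rfl⟩ ?_
  · by_contra! h
    exact LieAlgebra.IsSimple.non_abelian (R := ℂ) (L := K) ⟨h⟩
  · rintro _ ⟨W, _, _, _, _, _, h, rfl⟩
    exact LieAlgebra.IsSimple.two_le_finrank h

end MinNontrivialDim

section Main

variable {ι : Type} [Fintype ι] [DecidableEq ι] {L : ι → Type} [∀ i, LieRing (L i)]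
  [∀ i, LieAlgebra ℂ (L i)] {M : Type} [AddCommGroup M] [Module ℂ M]
  [LieRingModule (⨁ i, L i) M] [LieModule ℂ (⨁ i, L i) M] [FiniteDimensional ℂ M]

/-- `E` is `Hom_{Lᵢ}(V, M)` for a simple `Lᵢ`-submodule `V` of `M`; the direct sum acts on `V`
through its `i`-th component, so `E` is the `Lᵢ`-invariant part of the module `V →ₗ[ℂ] M`. -/
theorem exists_multiplicity_module [LieModule.IsIrreducible ℂ (⨁ i, L i) M] {i : ι}
    (hi : i ∈ nontrivialSummands ℂ L M) :
    ∃ (E : Type) (_ : AddCommGroup E) (_ : Module ℂ E) (_ : LieRingModule (⨁ i, L i) E)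
      (_ : LieModule ℂ (⨁ i, L i) E) (_ : FiniteDimensional ℂ E),
      0 < finrank ℂ E ∧ minNontrivialDim (L i) * finrank ℂ E ≤ finrank ℂ M ∧
      (nontrivialSummands ℂ L M).erase i ⊆ nontrivialSummands ℂ L E := by
  let : LieRingModule (L i) M := LieRingModule.compLieHom M (lieAlgebraOf ℂ ι L i)
  have : LieModule ℂ (L i) M := LieModule.compLieHom M (lieAlgebraOf ℂ ι L i)
  have : Nontrivial M := LieModule.nontrivial_of_isIrreducible ℂ (⨁ i, L i) M
  obtain ⟨V, hV, -⟩ :=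
    (eq_bot_or_exists_atom_le (⊤ : LieSubmodule ℂ (L i) M)).resolve_left top_ne_bot
  have := LieSubmodule.isIrreducible_of_isAtom hV
  have : Nontrivial V := LieModule.nontrivial_of_isIrreducible ℂ (L i) V
  let : LieRingModule (⨁ j, L j) V := LieRingModule.compLieHom V (lieAlgebraComponent ℂ ι L i)
  have : LieModule ℂ (⨁ j, L j) V := LieModule.compLieHom V (lieAlgebraComponent ℂ ι L i)
  let E := invariantsOfSummand ℂ L i (V →ₗ[ℂ] M)
  have hE := toSubmodule_invariantsOfSummand_linearMap_eq_maxTrivSubmodule (R := ℂ) (L := L)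
    (i := i) (V := V) (M := M) (fun _ _ => rfl) (fun _ _ => rfl)
  have hincl : (V.incl : V →ₗ[ℂ] M) ∈ E := by
    rw [← LieSubmodule.mem_toSubmodule, hE]
    exact (LieModule.maxTrivLinearMapEquivLieModuleHom.symm V.incl).2
  have hincl0 : (V.incl : V →ₗ[ℂ] M) ≠ 0 := by
    obtain ⟨v, hv⟩ := exists_ne (0 : V)
    exact fun h => hv (Subtype.ext (LinearMap.congr_fun h v))
  have : Nontrivial E := ⟨⟨_, hincl⟩, 0, fun h => hincl0 (congrArg Subtype.val h)⟩
  have hdimV : minNontrivialDim (L i) ≤ finrank ℂ V := minNontrivialDim_le_finrank _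
    (exists_lie_ne_zero_of_invariantsOfSummand_eq_bot (fun _ _ => rfl)
      (f := V.incl) (fun h => hincl0 (congrArg LieModuleHom.toLinearMap h))
      (invariantsOfSummand_eq_bot hi))
  have hdimE : finrank ℂ E = finrank ℂ (V →ₗ⁅ℂ,L i⁆ M) :=
    (LinearEquiv.ofEq _ _ hE ≪≫ₗ LieModule.maxTrivLinearMapEquivLieModuleHom).finrank_eq
  refine ⟨E, inferInstance, inferInstance, inferInstance, inferInstance, inferInstance,
    finrank_pos, ?_, fun j hj => ?_⟩
  · calc minNontrivialDim (L i) * finrank ℂ E ≤ finrank ℂ V * finrank ℂ E := by gcongr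
      _ ≤ finrank ℂ M := hdimE ▸ LieModule.IsIrreducible.finrank_mul_finrank_lieModuleHom_le
  · exact mem_nontrivialSummands_invariantsOfSummand_linearMap (fun _ _ => rfl) hincl hincl0
      (Finset.ne_of_mem_erase hj) (invariantsOfSummand_eq_bot (Finset.mem_of_mem_erase hj))

variable [∀ i, LieAlgebra.IsSimple ℂ (L i)]

theorem sum_le_finrank_of_lieSubmodule (N : LieSubmodule ℂ (⨁ i, L i) M)
    (hN : ∑ j ∈ nontrivialSummands ℂ L N, minNontrivialDim (L j) ≤ finrank ℂ N)
    (hQ : ∑ j ∈ nontrivialSummands ℂ L (M ⧸ N), minNontrivialDim (L j) ≤ finrank ℂ (M ⧸ N)) :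
    ∑ j ∈ nontrivialSummands ℂ L M, minNontrivialDim (L j) ≤ finrank ℂ M := by
  set A := nontrivialSummands ℂ L N
  set B := nontrivialSummands ℂ L (M ⧸ N)
  calc ∑ j ∈ nontrivialSummands ℂ L M, minNontrivialDim (L j)
      ≤ ∑ j ∈ A ∪ B, minNontrivialDim (L j) :=
        Finset.sum_le_sum_of_subset (nontrivialSummands_subset_union N)
    _ ≤ ∑ j ∈ A ∪ B, minNontrivialDim (L j) + ∑ j ∈ A ∩ B, minNontrivialDim (L j) :=
        Nat.le_add_right _ _
    _ = ∑ j ∈ A, minNontrivialDim (L j) + ∑ j ∈ B, minNontrivialDim (L j) :=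
        Finset.sum_union_inter
    _ ≤ finrank ℂ N + finrank ℂ (M ⧸ N) := add_le_add hN hQ
    _ = finrank ℂ M := by
        rw [add_comm]
        exact (N : Submodule ℂ M).finrank_quotient_add_finrank

variable [∀ i, FiniteDimensional ℂ (L i)]

theorem sum_le_finrank_of_isIrreducible [LieModule.IsIrreducible ℂ (⨁ i, L i) M] {i : ι}
    (hi : i ∈ nontrivialSummands ℂ L M)
    (ih : ∀ (E : Type) [AddCommGroup E] [Module ℂ E] [LieRingModule (⨁ i, L i) E]
      [LieModule ℂ (⨁ i, L i) E] [FiniteDimensional ℂ E], finrank ℂ E < finrank ℂ M →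
      ∑ j ∈ nontrivialSummands ℂ L E, minNontrivialDim (L j) ≤ finrank ℂ E) :
    ∑ j ∈ nontrivialSummands ℂ L M, minNontrivialDim (L j) ≤ finrank ℂ M := by
  obtain ⟨E, _, _, _, _, _, hE0, hdimE, hsub⟩ := exists_multiplicity_module hi
  have hdi := two_le_minNontrivialDim (L i)
  have hSE : ∑ j ∈ (nontrivialSummands ℂ L M).erase i, minNontrivialDim (L j) ≤ finrank ℂ E :=
    (Finset.sum_le_sum_of_subset hsub).trans (ih E (by nlinarith))
  rw [← Finset.add_sum_erase _ _ hi]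
  rcases ((nontrivialSummands ℂ L M).erase i).eq_empty_or_nonempty with hemp | ⟨j, hj⟩
  · rw [hemp, Finset.sum_empty, add_zero]
    nlinarith
  · have hdj : 2 ≤ ∑ j ∈ (nontrivialSummands ℂ L M).erase i, minNontrivialDim (L j) :=
      (two_le_minNontrivialDim (L j)).trans
        (Finset.single_le_sum (f := fun j => minNontrivialDim (L j)) (by simp) hj)
    calc _ ≤ minNontrivialDim (L i) *
          ∑ j ∈ (nontrivialSummands ℂ L M).erase i, minNontrivialDim (L j) := add_le_mul hdi hdj
      _ ≤ minNontrivialDim (L i) * finrank ℂ E := by gcongr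
      _ ≤ finrank ℂ M := hdimE

theorem sum_minNontrivialDim_le_finrank (M : Type) [AddCommGroup M] [Module ℂ M]
    [LieRingModule (⨁ i, L i) M] [LieModule ℂ (⨁ i, L i) M] [FiniteDimensional ℂ M] :
    ∑ j ∈ nontrivialSummands ℂ L M, minNontrivialDim (L j) ≤ finrank ℂ M := by
  induction hn : finrank ℂ M using Nat.strong_induction_on generalizing M with
  | _ n ih =>
  subst hn
  rcases (nontrivialSummands ℂ L M).eq_empty_or_nonempty with hemp | ⟨i, hi⟩
  · simp [hemp]
  by_cases hred : ∃ N : LieSubmodule ℂ (⨁ i, L i) M, N ≠ ⊥ ∧ N ≠ ⊤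
  · obtain ⟨N, hbot, htop⟩ := hred
    have hsplit : finrank ℂ (M ⧸ N) + finrank ℂ N = finrank ℂ M :=
      (N : Submodule ℂ M).finrank_quotient_add_finrank
    have hN : finrank ℂ N < finrank ℂ M :=
      Submodule.finrank_lt (s := (N : Submodule ℂ M)) (by simpa using htop)
    have hN0 : finrank ℂ N ≠ 0 := fun h => hbot (by simpa using Submodule.finrank_eq_zero.mp h)
    exact sum_le_finrank_of_lieSubmodule N (ih _ hN N rfl) (ih _ (by omega) (M ⧸ N) rfl)
  · have : Nontrivial M := by
      refine not_subsingleton_iff_nontrivial.mp fun _ => mem_nontrivialSummands.mp hi ?_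
      exact invariantsOfSummand_eq_top_iff.mpr fun x m => by simp [Subsingleton.elim m 0]
    have := LieModule.IsIrreducible.mk fun N hN => by_contra fun htop => hred ⟨N, hN, htop⟩
    exact sum_le_finrank_of_isIrreducible hi fun E _ _ _ _ _ hE => ih _ hE E rfl

end Main

/-- If `𝔤 = 𝔤₁ ⊕ ⋯ ⊕ 𝔤ₙ` is a direct sum of simple complex Lie algebras, `dᵢ` is the minimal
dimension of a nontrivial `𝔤ᵢ`-module, and `M` is a finite-dimensional `𝔤`-module with
`dim M < d₁ + ⋯ + dₙ`, then some summand `𝔤ᵢ` acts trivially on `M`. -/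
theorem directSum_module_small_dim_trivial_on_summand
    {ι : Type} [Fintype ι] [DecidableEq ι]
    (L : ι → Type) [∀ i, LieRing (L i)] [∀ i, LieAlgebra ℂ (L i)]
    [∀ i, LieAlgebra.IsSimple ℂ (L i)] [∀ i, FiniteDimensional ℂ (L i)]
    (M : Type) [AddCommGroup M] [Module ℂ M]
    [LieRingModule (⨁ i, L i) M] [LieModule ℂ (⨁ i, L i) M]
    [FiniteDimensional ℂ M]
    (hdim : Module.finrank ℂ M < ∑ i, minNontrivialDim (L i)) :
    ∃ i, ∀ (x : L i) (m : M), ⁅DirectSum.of L i x, m⁆ = 0 := by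
  by_contra! h
  have huniv : nontrivialSummands ℂ L M = Finset.univ :=
    Finset.eq_univ_of_forall fun i => mem_nontrivialSummands.mpr fun htop => by
      obtain ⟨x, m, hxm⟩ := h i
      exact hxm (invariantsOfSummand_eq_top_iff.mp htop x m)
  exact (sum_minNontrivialDim_le_finrank (L := L) M).not_gt (huniv ▸ hdim)
end

section
/- Let Λ be a weight such that (Λ,α) < 0 for all α ∈ A, (Λ,β) = 0 for all β ∈ B, and Λ + γ is regular. Then the number of positive roots δ ∈ Δ₊ with (Λ + γ, δ) < 0 is at least ℓ(A,B), the number of significant (A,B)-roots. -/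
open scoped RealInnerProductSpace
open scoped Classical

namespace RootSystemData

variable {V : Type*} [NormedAddCommGroup V] [InnerProductSpace ℝ V]

variable {R : RootSystemData V}

lemma root_inner_self_pos {δ : V} (h : δ ∈ R.roots) : 0 < ⟪δ, δ⟫ := by
  rw [real_inner_self_eq_norm_sq]
  exact pow_pos (norm_pos_iff.mpr (R.root_ne_zero δ h)) 2

lemma coeff_eq_of_sum_eq {f g : V → ℝ}
    (h : ∑ α ∈ R.simple, f α • α = ∑ α ∈ R.simple, g α • α) :
    ∀ α ∈ R.simple, f α = g α := by
  intro α hα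
  have li := linearIndependent_iff'.1 R.linearIndependent
  have h2 : ∑ a ∈ R.simple.attach, (f a.1 - g a.1) • (a.1 : V) = 0 := by
    simp only [sub_smul]
    rw [Finset.sum_sub_distrib,
      Finset.sum_attach R.simple (fun x => f x • x),
      Finset.sum_attach R.simple (fun x => g x • x), h, sub_self]
  have := li R.simple.attach (fun a => f a.1 - g a.1) h2 ⟨α, hα⟩ (Finset.mem_attach _ _)
  simpa [sub_eq_zero] using this

lemma coeff_add' (x y : V) {α : V} (hα : α ∈ R.simple) :
    R.coeff (x + y) α = R.coeff x α + R.coeff y α := by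
  refine coeff_eq_of_sum_eq (f := R.coeff (x + y))
    (g := fun β => R.coeff x β + R.coeff y β) ?_ α hα
  simp only [add_smul]
  rw [Finset.sum_add_distrib, ← R.coeff_spec x, ← R.coeff_spec y, ← R.coeff_spec (x + y)]

lemma coeff_smul' (t : ℝ) (x : V) {α : V} (hα : α ∈ R.simple) :
    R.coeff (t • x) α = t * R.coeff x α := by
  refine coeff_eq_of_sum_eq (f := R.coeff (t • x))
    (g := fun β => t * R.coeff x β) ?_ α hα
  simp only [mul_smul]
  rw [← Finset.smul_sum, ← R.coeff_spec x, ← R.coeff_spec (t • x)]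

lemma coeff_neg' (x : V) {α : V} (hα : α ∈ R.simple) :
    R.coeff (-x) α = - R.coeff x α := by
  have h : (-x : V) = (-1 : ℝ) • x := by simp
  rw [h, coeff_smul' _ _ hα]; ring

lemma coeff_sub' (x y : V) {α : V} (hα : α ∈ R.simple) :
    R.coeff (x - y) α = R.coeff x α - R.coeff y α := by
  rw [sub_eq_add_neg, coeff_add' _ _ hα, coeff_neg' _ hα]; ring

lemma coeff_simple {α β : V} (hα : α ∈ R.simple) (hβ : β ∈ R.simple) :
    R.coeff α β = if β = α then 1 else 0 := by
  refine coeff_eq_of_sum_eq (f := R.coeff α)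
    (g := fun β => if β = α then 1 else 0) ?_ β hβ
  have h : ∑ b ∈ R.simple, (if b = α then (1:ℝ) else 0) • b = α := by
    simp only [ite_smul, one_smul, zero_smul]
    rw [Finset.sum_ite_eq' R.simple α (fun b => b), if_pos hα]
  rw [h, ← R.coeff_spec α]

lemma eq_zero_of_coeff (x : V) (h : ∀ α ∈ R.simple, R.coeff x α = 0) : x = 0 := by
  rw [R.coeff_spec x]
  exact Finset.sum_eq_zero fun a ha => by rw [h a ha, zero_smul]

lemma inner_expand (η ξ : V) : ⟪η, ξ⟫ = ∑ α ∈ R.simple, R.coeff ξ α * ⟪η, α⟫ := by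
  conv_lhs => rw [R.coeff_spec ξ]
  rw [inner_sum]
  exact Finset.sum_congr rfl fun a _ => real_inner_smul_right _ _ _

lemma inner_expand_left (ξ η : V) : ⟪ξ, η⟫ = ∑ α ∈ R.simple, R.coeff ξ α * ⟪α, η⟫ := by
  conv_lhs => rw [R.coeff_spec ξ]
  rw [sum_inner]
  exact Finset.sum_congr rfl fun a _ => real_inner_smul_left _ _ _

lemma mem_pos_of_coeff_pos {δ β : V} (hδ : δ ∈ R.roots) (hβ : β ∈ R.simple)
    (h : 0 < R.coeff δ β) : δ ∈ R.pos := by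
  rcases R.pos_or_neg δ hδ with h1 | h1
  · exact h1
  · exfalso
    have hnn := R.pos_coeff_nonneg _ h1 β hβ
    rw [coeff_neg' _ hβ] at hnn; linarith

lemma eq_simple {δ α : V} (hδ : δ ∈ R.pos) (hα : α ∈ R.simple)
    (h : ∀ β ∈ R.simple, β ≠ α → R.coeff δ β = 0) : δ = α := by
  have hcol : δ = R.coeff δ α • α := by
    conv_lhs => rw [R.coeff_spec δ]
    exact Finset.sum_eq_single_of_mem α hα fun b hb hne => by rw [h b hb hne, zero_smul]
  have hroot : R.coeff δ α • α ∈ R.roots := hcol ▸ R.pos_subset hδ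
  rcases R.reduced α (R.pos_subset (R.simple_subset hα)) _ hroot with h1 | h1
  · rw [hcol, h1, one_smul]
  · exfalso
    have hnn := R.pos_coeff_nonneg δ hδ α hα
    have hda : δ = -α := by rw [hcol, h1]; simp
    exact R.pos_neg_not α (R.simple_subset hα) (hda ▸ hδ)

lemma exists_other_coeff {δ α : V} (hδ : δ ∈ R.pos) (hα : α ∈ R.simple) (hne : δ ≠ α) :
    ∃ β ∈ R.simple, β ≠ α ∧ 0 < R.coeff δ β := by
  by_contra hcon
  push_neg at hcon
  exact hne (eq_simple hδ hα fun β hβ hbne =>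
    le_antisymm (hcon β hβ hbne) (R.pos_coeff_nonneg δ hδ β hβ))

lemma exists_pos_dir {ξ : V} (h0 : ξ ≠ 0) (hnn : ∀ α ∈ R.simple, 0 ≤ R.coeff ξ α) :
    ∃ α ∈ R.simple, 0 < R.coeff ξ α ∧ 0 < ⟪α, ξ⟫ := by
  by_contra hcon
  push_neg at hcon
  have hpos : 0 < ⟪ξ, ξ⟫ := by
    rw [real_inner_self_eq_norm_sq]; exact pow_pos (norm_pos_iff.mpr h0) 2
  have hexp := inner_expand_left (R := R) ξ ξ
  have hle : ∑ α ∈ R.simple, R.coeff ξ α * ⟪α, ξ⟫ ≤ 0 := by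
    apply Finset.sum_nonpos
    intro a ha
    rcases eq_or_lt_of_le (hnn a ha) with h1 | h1
    · rw [← h1, zero_mul]
    · have := hcon a ha h1
      nlinarith
  linarith
lemma sub_mem_of_inner_pos {δ ε : V} (hδ : δ ∈ R.roots) (hε : ε ∈ R.roots)
    (hip : 0 < ⟪δ, ε⟫) (hne : δ ≠ ε) : δ - ε ∈ R.roots := by
  obtain ⟨n, hn⟩ := R.crystallographic δ hδ ε hε
  obtain ⟨m, hm⟩ := R.crystallographic ε hε δ hδ
  have hδδ : 0 < ⟪δ, δ⟫ := root_inner_self_pos hδ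
  have hεε : 0 < ⟪ε, ε⟫ := root_inner_self_pos hε
  have hεδ : ⟪ε, δ⟫ = ⟪δ, ε⟫ := real_inner_comm _ _
  have hn' : 2 * ⟪δ, ε⟫ = n * ⟪ε, ε⟫ := (div_eq_iff hεε.ne').1 hn
  have hm' : 2 * ⟪δ, ε⟫ = m * ⟪δ, δ⟫ := by
    rw [← hεδ]; exact (div_eq_iff hδδ.ne').1 hm
  have hn0 : 0 < n := by
    have : (0:ℝ) < n := by nlinarith
    exact_mod_cast this
  have hm0 : 0 < m := by
    have : (0:ℝ) < m := by nlinarith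
    exact_mod_cast this
  by_cases hn1 : n = 1
  · have := R.reflect_mem δ hδ ε hε
    rw [hn, hn1] at this
    simpa using this
  by_cases hm1 : m = 1
  · have := R.reflect_mem ε hε δ hδ
    rw [hm, hm1] at this
    simp only [Int.cast_one, one_smul] at this
    have h2 := R.neg_mem _ this
    rwa [neg_sub] at h2
  · exfalso
    have hn2 : (2:ℤ) ≤ n := by omega
    have hm2 : (2:ℤ) ≤ m := by omega
    have hn2' : (2:ℝ) ≤ n := by exact_mod_cast hn2
    have hm2' : (2:ℝ) ≤ m := by exact_mod_cast hm2
    have hsub : ⟪δ - ε, δ - ε⟫ = ⟪δ, δ⟫ - 2 * ⟪δ, ε⟫ + ⟪ε, ε⟫ := real_inner_sub_sub_self δ ε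
    have hzero : ⟪δ - ε, δ - ε⟫ = 0 := by
      have h1 : (0:ℝ) ≤ ⟪δ - ε, δ - ε⟫ := real_inner_self_nonneg
      nlinarith
    have : δ - ε = 0 := inner_self_eq_zero.1 hzero
    exact hne (sub_eq_zero.1 this)

lemma min_le_inner_self_add {ρ α : V} (hρ : ρ ∈ R.roots) (hα : α ∈ R.roots)
    (hsum : ρ + α ∈ R.roots) (hle : ⟪ρ, ρ⟫ ≤ ⟪α, α⟫) (hneg : ⟪ρ, α⟫ < 0) :
    ⟪ρ + α, ρ + α⟫ = ⟪ρ, ρ⟫ := by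
  obtain ⟨n, hn⟩ := R.crystallographic ρ hρ α hα
  have hαα : 0 < ⟪α, α⟫ := root_inner_self_pos hα
  have hρρ : 0 < ⟪ρ, ρ⟫ := root_inner_self_pos hρ
  have hn' : 2 * ⟪ρ, α⟫ = n * ⟪α, α⟫ := (div_eq_iff hαα.ne').1 hn
  have hn0 : n < 0 := by
    have : (n:ℝ) < 0 := by nlinarith
    exact_mod_cast this
  have hcs : |⟪ρ, α⟫| ≤ ‖ρ‖ * ‖α‖ := abs_real_inner_le_norm _ _
  have hnorm : ‖ρ‖ ≤ ‖α‖ := by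
    by_contra hc
    push_neg at hc
    have := pow_lt_pow_left₀ hc (norm_nonneg α) (by norm_num : 2 ≠ 0)
    rw [← real_inner_self_eq_norm_sq, ← real_inner_self_eq_norm_sq] at this
    linarith
  have hbound : -(2 * ⟪ρ, α⟫) ≤ 2 * ⟪α, α⟫ := by
    have h1 : ‖ρ‖ * ‖α‖ ≤ ‖α‖ * ‖α‖ := mul_le_mul_of_nonneg_right hnorm (norm_nonneg _)
    have h2 := (abs_le.1 hcs).1
    have h3 : ⟪α, α⟫ = ‖α‖ * ‖α‖ := real_inner_self_eq_norm_mul_norm α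
    linarith
  have hn2 : (-2:ℤ) ≤ n := by
    have : (-2:ℝ) ≤ (n:ℝ) := by nlinarith
    exact_mod_cast this
  have hadd : ⟪ρ + α, ρ + α⟫ = ⟪ρ, ρ⟫ + 2 * ⟪ρ, α⟫ + ⟪α, α⟫ := real_inner_add_add_self ρ α
  have hcase : n = -1 ∨ n = -2 := by omega
  rcases hcase with h1 | h1
  · rw [h1] at hn'; push_cast at hn'; linarith
  · exfalso
    rw [h1] at hn'; push_cast at hn'
    have hzero : ⟪ρ + α, ρ + α⟫ = 0 := by
      have := real_inner_self_nonneg (x := ρ + α)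
      nlinarith
    exact R.root_ne_zero _ hsum (inner_self_eq_zero.1 hzero)

lemma min_le_sum_root {ρ α : V} (hρ : ρ ∈ R.roots) (hα : α ∈ R.roots)
    (hsum : ρ + α ∈ R.roots) : min ⟪ρ, ρ⟫ ⟪α, α⟫ ≤ ⟪ρ + α, ρ + α⟫ := by
  have hadd : ⟪ρ + α, ρ + α⟫ = ⟪ρ, ρ⟫ + 2 * ⟪ρ, α⟫ + ⟪α, α⟫ := real_inner_add_add_self ρ α
  rcases lt_or_ge ⟪ρ, α⟫ 0 with hneg | hpos
  · rcases le_total ⟪ρ, ρ⟫ ⟪α, α⟫ with h1 | h1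
    · rw [min_le_inner_self_add hρ hα hsum h1 hneg]
      exact min_le_left _ _
    · have hsum' : α + ρ ∈ R.roots := by rwa [add_comm] at hsum
      have hneg' : ⟪α, ρ⟫ < 0 := by rwa [real_inner_comm]
      have := min_le_inner_self_add hα hρ hsum' h1 hneg'
      rw [add_comm] at this
      rw [this]
      exact min_le_right _ _
  · have h1 := root_inner_self_pos hρ
    have h2 := root_inner_self_pos hα
    rcases le_total ⟪ρ, ρ⟫ ⟪α, α⟫ with h3 | h3
    · rw [min_eq_left h3]; nlinarith
    · rw [min_eq_right h3]; nlinarith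
lemma coeff_int : ∀ δ ∈ R.pos, ∀ α ∈ R.simple, ∃ n : ℤ, R.coeff δ α = n := by
  have key : ∀ N : ℕ, ∀ δ, δ ∈ R.pos → (R.pos.filter fun τ => R.cle τ δ).card = N →
      ∀ α ∈ R.simple, ∃ n : ℤ, R.coeff δ α = n := by
    intro N
    induction N using Nat.strong_induction_on with
    | _ N ih =>
      intro δ hδ hcard
      have hδr := R.pos_subset hδ
      obtain ⟨α₁, hαs, hc, hi⟩ := exists_pos_dir (R.root_ne_zero δ hδr) (R.pos_coeff_nonneg δ hδ)
      by_cases hda : δ = α₁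
      · subst hda
        intro β hβ
        refine ⟨if β = δ then 1 else 0, ?_⟩
        rw [coeff_simple hαs hβ]
        split <;> simp
      · have hα₁r : α₁ ∈ R.roots := R.pos_subset (R.simple_subset hαs)
        have hip : 0 < ⟪δ, α₁⟫ := by rwa [real_inner_comm] at hi
        have hsub : δ - α₁ ∈ R.roots := sub_mem_of_inner_pos hδr hα₁r hip hda
        have hsubpos : δ - α₁ ∈ R.pos := by
          rcases R.pos_or_neg _ hsub with h1 | h1
          · exact h1
          · exfalso
            apply hda
            apply eq_simple hδ hαs
            intro β hβ hne
            have h2 := R.pos_coeff_nonneg _ h1 β hβ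
            rw [coeff_neg' _ hβ, coeff_sub' _ _ hβ, coeff_simple hαs hβ, if_neg hne] at h2
            have h3 := R.pos_coeff_nonneg δ hδ β hβ
            linarith
        have hsubset : (R.pos.filter fun τ => R.cle τ (δ - α₁)) ⊆
            (R.pos.filter fun τ => R.cle τ δ) := by
          intro τ hτ
          simp only [Finset.mem_filter] at hτ ⊢
          refine ⟨hτ.1, fun β hβ => ?_⟩
          have h4 := hτ.2 β hβ
          rw [coeff_sub' _ _ hβ, coeff_simple hαs hβ] at h4
          split at h4 <;> linarith
        have hδmem : δ ∈ R.pos.filter fun τ => R.cle τ δ := by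
          simp only [Finset.mem_filter]; exact ⟨hδ, fun β hβ => le_refl _⟩
        have hδnmem : δ ∉ R.pos.filter fun τ => R.cle τ (δ - α₁) := by
          simp only [Finset.mem_filter, not_and]
          intro _ hcle
          have h2 := hcle α₁ hαs
          rw [coeff_sub' _ _ hαs, coeff_simple hαs hαs, if_pos rfl] at h2
          linarith
        have hlt : (R.pos.filter fun τ => R.cle τ (δ - α₁)).card < N := by
          rw [← hcard]
          exact Finset.card_lt_card ((Finset.ssubset_iff_of_subset hsubset).2
            ⟨δ, hδmem, hδnmem⟩)
        have IH := ih _ hlt (δ - α₁) hsubpos rfl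
        intro β hβ
        obtain ⟨n, hn⟩ := IH β hβ
        rw [coeff_sub' _ _ hβ, coeff_simple hαs hβ] at hn
        by_cases hba : β = α₁
        · rw [if_pos hba] at hn
          exact ⟨n + 1, by push_cast; linarith⟩
        · rw [if_neg hba] at hn
          exact ⟨n, by linarith⟩
  exact fun δ hδ => key _ δ hδ rfl

lemma reflect_reflect {α : V} (hαα : ⟪α, α⟫ ≠ 0) (x : V) :
    (x - (2 * ⟪x, α⟫ / ⟪α, α⟫) • α) -
      (2 * ⟪x - (2 * ⟪x, α⟫ / ⟪α, α⟫) • α, α⟫ / ⟪α, α⟫) • α = x := by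
  have h1 : ⟪x - (2 * ⟪x, α⟫ / ⟪α, α⟫) • α, α⟫ = -⟪x, α⟫ := by
    rw [inner_sub_left, real_inner_smul_left]
    field_simp
    ring
  rw [h1, show 2 * -⟪x, α⟫ / ⟪α, α⟫ = -(2 * ⟪x, α⟫ / ⟪α, α⟫) by ring, neg_smul,
    sub_neg_eq_add, sub_add_cancel]

lemma reflect_inner {α : V} (hαα : ⟪α, α⟫ ≠ 0) (x : V) :
    ⟪x - (2 * ⟪x, α⟫ / ⟪α, α⟫) • α, α⟫ = -⟪x, α⟫ := by
  rw [inner_sub_left, real_inner_smul_left]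
  field_simp
  ring

lemma gamma_inner_simple {α : V} (hα : α ∈ R.simple) : ⟪R.gamma, α⟫ = ⟪α, α⟫ / 2 := by
  have hαp : α ∈ R.pos := R.simple_subset hα
  have hαr : α ∈ R.roots := R.pos_subset hαp
  have hαα : 0 < ⟪α, α⟫ := root_inner_self_pos hαr
  have hT : ∑ δ ∈ R.pos.erase α, ⟪δ, α⟫ = 0 := by
    apply Finset.sum_involution (g := fun δ _ => δ - (2 * ⟪δ, α⟫ / ⟪α, α⟫) • α)
    · intro a _
      rw [reflect_inner hαα.ne' a]
      ring
    · intro a _ hfa hcon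
      apply hfa
      have h2 : (2 * ⟪a, α⟫ / ⟪α, α⟫) • α = 0 := by
        have := sub_eq_self.1 hcon
        exact this
      rcases smul_eq_zero.1 h2 with h3 | h3
      · rw [div_eq_zero_iff] at h3
        rcases h3 with h4 | h4
        · linarith
        · exact absurd h4 hαα.ne'
      · exact absurd h3 (R.root_ne_zero α hαr)
    · intro a ha
      rw [Finset.mem_erase] at ha ⊢
      obtain ⟨hane, hapos⟩ := ha
      have har : a ∈ R.roots := R.pos_subset hapos
      have hrar : a - (2 * ⟪a, α⟫ / ⟪α, α⟫) • α ∈ R.roots := R.reflect_mem a har α hαr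
      obtain ⟨β, hβ, hβne, hβpos⟩ := exists_other_coeff hapos hα hane
      have hcoeff : R.coeff (a - (2 * ⟪a, α⟫ / ⟪α, α⟫) • α) β = R.coeff a β := by
        rw [coeff_sub' _ _ hβ, coeff_smul' _ _ hβ, coeff_simple hα hβ, if_neg hβne]
        ring
      constructor
      · intro hcon
        rw [hcon, coeff_simple hα hβ, if_neg hβne] at hcoeff
        linarith
      · exact mem_pos_of_coeff_pos hrar hβ (by rw [hcoeff]; exact hβpos)
    · intro a _
      exact reflect_reflect hαα.ne' a
  have hsum : ∑ δ ∈ R.pos, ⟪δ, α⟫ = ⟪α, α⟫ := by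
    rw [← Finset.add_sum_erase _ _ hαp, hT, add_zero]
  rw [RootSystemData.gamma, real_inner_smul_left, sum_inner, hsum]
  ring
lemma gamma_int {σ : V} (hσ : σ ∈ R.roots) : ∃ m : ℤ, 2 * ⟪R.gamma, σ⟫ = m * ⟪σ, σ⟫ := by
  have hσσ : 0 < ⟪σ, σ⟫ := root_inner_self_pos hσ
  have hch : ∀ δ : V, ∃ n : ℤ, δ ∈ R.pos → 2 * ⟪δ, σ⟫ = n * ⟪σ, σ⟫ := by
    intro δ
    by_cases h : δ ∈ R.pos
    · obtain ⟨n, hn⟩ := R.crystallographic δ (R.pos_subset h) σ hσ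
      exact ⟨n, fun _ => (div_eq_iff hσσ.ne').1 hn⟩
    · exact ⟨0, fun h' => absurd h' h⟩
  choose nn hnn using hch
  set r : V → V := fun x => x - (2 * ⟪x, σ⟫ / ⟪σ, σ⟫) • σ with hr
  have hr_inner : ∀ x, ⟪r x, σ⟫ = -⟪x, σ⟫ := fun x => reflect_inner hσσ.ne' x
  have hrr : ∀ x, r (r x) = x := fun x => reflect_reflect hσσ.ne' x
  have hr_root : ∀ x ∈ R.roots, r x ∈ R.roots := fun x hx => R.reflect_mem x hx σ hσ
  have hr_neg : ∀ x, r (-x) = - r x := by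
    intro x
    simp only [hr, inner_neg_left]
    rw [show 2 * -⟪x, σ⟫ / ⟪σ, σ⟫ = -(2 * ⟪x, σ⟫ / ⟪σ, σ⟫) by ring]
    rw [neg_smul, sub_neg_eq_add, neg_sub]
    abel
  set g : V → V := fun x => if r x ∈ R.pos then r x else -(r x) with hg
  have hg_mem : ∀ a ∈ R.pos, g a ∈ R.pos := by
    intro a ha
    simp only [hg]
    split
    · assumption
    · rcases R.pos_or_neg (r a) (hr_root a (R.pos_subset ha)) with h1 | h1
      · exact absurd h1 (by assumption)
      · exact h1
  have hg_inner : ∀ a, ⟪g a, σ⟫ = -⟪a, σ⟫ ∨ ⟪g a, σ⟫ = ⟪a, σ⟫ := by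
    intro a
    simp only [hg]
    split
    · exact Or.inl (hr_inner a)
    · right; rw [inner_neg_left, hr_inner a, neg_neg]
  have hg_nn : ∀ a ∈ R.pos, nn (g a) = - nn a ∨ nn (g a) = nn a := by
    intro a ha
    have h1 := hnn a ha
    have h2 := hnn (g a) (hg_mem a ha)
    rcases hg_inner a with h3 | h3
    · left
      have : (nn (g a) : ℝ) * ⟪σ, σ⟫ = (-nn a : ℤ) * ⟪σ, σ⟫ := by
        push_cast
        rw [← h2, h3]
        nlinarith [h1]
      have h4 : (nn (g a) : ℝ) = ((-nn a : ℤ) : ℝ) :=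
        mul_right_cancel₀ hσσ.ne' this
      exact_mod_cast h4
    · right
      have : (nn (g a) : ℝ) * ⟪σ, σ⟫ = (nn a : ℝ) * ⟪σ, σ⟫ := by
        rw [← h2, h3, h1]
      have h4 : (nn (g a) : ℝ) = (nn a : ℝ) := mul_right_cancel₀ hσσ.ne' this
      exact_mod_cast h4
  have hzmod : ∀ x : ZMod 2, x + x = 0 := by decide
  have hz : ((∑ δ ∈ R.pos, nn δ : ℤ) : ZMod 2) = 0 := by
    push_cast
    apply Finset.sum_involution (g := fun δ _ => g δ)
    · intro a ha
      rcases hg_nn a ha with h1 | h1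
      · rw [h1]; push_cast; ring
      · rw [h1]; exact hzmod _
    · intro a ha hfa hcon
      apply hfa
      simp only [hg] at hcon
      by_cases hpos : r a ∈ R.pos
      · rw [if_pos hpos] at hcon
        have h2 : (2 * ⟪a, σ⟫ / ⟪σ, σ⟫) • σ = 0 := sub_eq_self.1 hcon
        have h3 : ⟪a, σ⟫ = 0 := by
          rcases smul_eq_zero.1 h2 with h3 | h3
          · rw [div_eq_zero_iff] at h3
            rcases h3 with h4 | h4
            · linarith
            · exact absurd h4 hσσ.ne'
          · exact absurd h3 (R.root_ne_zero σ hσ)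
        have h4 := hnn a ha
        rw [h3] at h4
        have h5 : (nn a : ℝ) = 0 := by
          rcases mul_eq_zero.1 (by linarith : (nn a : ℝ) * ⟪σ, σ⟫ = 0) with h6 | h6
          · exact h6
          · exact absurd h6 hσσ.ne'
        have : nn a = 0 := by exact_mod_cast h5
        rw [this]
        norm_num
      · rw [if_neg hpos] at hcon
        set c : ℝ := 2 * ⟪a, σ⟫ / ⟪σ, σ⟫ with hc
        have hra : r a = -a := neg_eq_iff_eq_neg.mp hcon
        have h3 : a + a = c • σ := by
          have h4 : (a - c • σ) + a = 0 := by
            show (r a) + a = 0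
            rw [hra]
            abel
          rw [sub_add_eq_add_sub, sub_eq_zero] at h4
          exact h4
        have h5 : a = (c / 2) • σ := by
          apply smul_right_injective V (by norm_num : (2:ℝ) ≠ 0)
          show (2:ℝ) • a = (2:ℝ) • ((c / 2) • σ)
          rw [two_smul, h3, smul_smul, show (2:ℝ) * (c / 2) = c by ring]
        have h7 : (c / 2) • σ ∈ R.roots := h5 ▸ R.pos_subset ha
        rcases R.reduced σ hσ _ h7 with h8 | h8
        · have h9 : a = σ := by rw [h5, h8, one_smul]
          have h10 := hnn a ha
          rw [show ⟪a, σ⟫ = ⟪σ, σ⟫ by rw [h9]] at h10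
          have : (nn a : ℝ) = 2 := by
            exact mul_right_cancel₀ hσσ.ne'
              (by linarith [h10] : (nn a : ℝ) * ⟪σ,σ⟫ = 2 * ⟪σ,σ⟫)
          have h11 : nn a = 2 := by exact_mod_cast this
          rw [h11]
          decide
        · have h9 : a = -σ := by rw [h5, h8]; simp
          have h10 := hnn a ha
          rw [show ⟪a, σ⟫ = -⟪σ, σ⟫ by rw [h9, inner_neg_left]] at h10
          have : (nn a : ℝ) = -2 := by
            exact mul_right_cancel₀ hσσ.ne'
              (by linarith [h10] : (nn a : ℝ) * ⟪σ,σ⟫ = -2 * ⟪σ,σ⟫)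
          have h11 : nn a = -2 := by exact_mod_cast this
          rw [h11]
          decide
    · intro a ha
      exact hg_mem a ha
    · intro a ha
      simp only [hg]
      by_cases h1 : r a ∈ R.pos
      · rw [if_pos h1]
        rw [hrr a]
        rw [if_pos ha]
      · rw [if_neg h1, hr_neg (r a), hrr a]
        rw [if_neg (R.pos_neg_not a ha)]
        simp
  have heven : (2:ℤ) ∣ ∑ δ ∈ R.pos, nn δ := by
    have := (ZMod.intCast_zmod_eq_zero_iff_dvd (∑ δ ∈ R.pos, nn δ) 2).1 hz
    exact_mod_cast this
  obtain ⟨m, hm⟩ := heven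
  refine ⟨m, ?_⟩
  have h1 : 2 * ⟪R.gamma, σ⟫ = ∑ δ ∈ R.pos, ⟪δ, σ⟫ := by
    rw [RootSystemData.gamma, real_inner_smul_left, sum_inner]
    ring
  have h2 : (2:ℝ) * ∑ δ ∈ R.pos, ⟪δ, σ⟫ = ((∑ δ ∈ R.pos, nn δ : ℤ) : ℝ) * ⟪σ, σ⟫ := by
    push_cast
    rw [Finset.mul_sum, Finset.sum_mul]
    exact Finset.sum_congr rfl fun δ hδ => hnn δ hδ
  rw [hm] at h2
  push_cast at h2
  linarith
lemma mu_int (Λ : V) (hw : R.IsWeight Λ) {τ : V} (hτ : τ ∈ R.roots) :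
    ∃ m : ℤ, 2 * ⟪Λ + R.gamma, τ⟫ = m * ⟪τ, τ⟫ := by
  obtain ⟨n, hn⟩ := hw τ hτ
  obtain ⟨k, hk⟩ := gamma_int hτ
  have hττ : 0 < ⟪τ, τ⟫ := root_inner_self_pos hτ
  have hn' : 2 * ⟪Λ, τ⟫ = n * ⟪τ, τ⟫ := (div_eq_iff hττ.ne').1 hn
  refine ⟨n + k, ?_⟩
  rw [inner_add_left]
  push_cast
  linarith

lemma step_bound (Λ : V) (hw : R.IsWeight Λ) (hreg : R.IsRegular (Λ + R.gamma))
    {τ : V} (hτ : τ ∈ R.pos) (h0 : ⟪Λ + R.gamma, τ⟫ ≤ 0) :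
    ⟪Λ + R.gamma, τ⟫ ≤ -⟪τ, τ⟫ / 2 := by
  obtain ⟨m, hm⟩ := mu_int Λ hw (R.pos_subset hτ)
  have hττ : 0 < ⟪τ, τ⟫ := root_inner_self_pos (R.pos_subset hτ)
  have hlt : ⟪Λ + R.gamma, τ⟫ < 0 := lt_of_le_of_ne h0 (hreg τ hτ)
  have hm0 : (m:ℝ) < 0 := by nlinarith
  have hm1 : m < 0 := by exact_mod_cast hm0
  have hm2 : (m:ℝ) ≤ -1 := by exact_mod_cast (by omega : m ≤ -1)
  nlinarith

lemma mu_A_le (Λ : V) (hw : R.IsWeight Λ) (hreg : R.IsRegular (Λ + R.gamma))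
    {A : Finset V} (hA : A ⊆ R.simple) (hAneg : ∀ α ∈ A, ⟪Λ, α⟫ < 0)
    {α : V} (hα : α ∈ A) : ⟪Λ + R.gamma, α⟫ ≤ -⟪α, α⟫ / 2 := by
  have hαs := hA hα
  have hαr : α ∈ R.roots := R.pos_subset (R.simple_subset hαs)
  have hαα : 0 < ⟪α, α⟫ := root_inner_self_pos hαr
  obtain ⟨n, hn⟩ := hw α hαr
  have hn' : 2 * ⟪Λ, α⟫ = n * ⟪α, α⟫ := (div_eq_iff hαα.ne').1 hn
  have hneg := hAneg α hα
  have hn0 : (n:ℝ) < 0 := by nlinarith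
  have hn1 : n < 0 := by exact_mod_cast hn0
  have hn2 : (n:ℝ) ≤ -1 := by exact_mod_cast (by omega : n ≤ -1)
  have hΛ : ⟪Λ, α⟫ ≤ -⟪α, α⟫ / 2 := by nlinarith
  have h0 : ⟪Λ + R.gamma, α⟫ ≤ 0 := by
    rw [inner_add_left, gamma_inner_simple hαs]
    linarith
  exact step_bound Λ hw hreg (R.simple_subset hαs) h0

lemma mu_B_eq (Λ : V) {B : Finset V} (hB : B ⊆ R.simple) (hB0 : ∀ β ∈ B, ⟪Λ, β⟫ = 0)
    {β : V} (hβ : β ∈ B) : ⟪Λ + R.gamma, β⟫ = ⟪β, β⟫ / 2 := by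
  rw [inner_add_left, gamma_inner_simple (hB hβ), hB0 β hβ, zero_add]

lemma sigma_bound (Λ : V) (hw : R.IsWeight Λ) (hreg : R.IsRegular (Λ + R.gamma))
    {A B : Finset V} (hA : A ⊆ R.simple) (hB : B ⊆ R.simple) (hAB : Disjoint A B)
    (hAneg : ∀ α ∈ A, ⟪Λ, α⟫ < 0) (hB0 : ∀ β ∈ B, ⟪Λ, β⟫ = 0)
    {σ : V} (hσ : σ ∈ R.pos) (hsup : R.support σ ⊆ A ∪ B)
    (hcond : (∑ β ∈ B, R.coeff σ β * ⟪β, β⟫) ≤ (∑ α ∈ A, R.coeff σ α * ⟪α, α⟫)) :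
    ⟪Λ + R.gamma, σ⟫ ≤ -⟪σ, σ⟫ / 2 := by
  have hexp : ⟪Λ + R.gamma, σ⟫ = ∑ α ∈ R.simple, R.coeff σ α * ⟪Λ + R.gamma, α⟫ :=
    inner_expand _ σ
  have hAB' : A ∪ B ⊆ R.simple := Finset.union_subset hA hB
  have hres : ⟪Λ + R.gamma, σ⟫ = (∑ α ∈ A, R.coeff σ α * ⟪Λ + R.gamma, α⟫)
      + ∑ β ∈ B, R.coeff σ β * ⟪Λ + R.gamma, β⟫ := by
    rw [hexp, ← Finset.sum_union hAB]
    symm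
    apply Finset.sum_subset hAB'
    intro x hx hnx
    have hz : R.coeff σ x = 0 := by
      by_contra hc
      exact hnx (hsup (Finset.mem_filter.2 ⟨hx, hc⟩))
    rw [hz, zero_mul]
  have hAle : ∑ α ∈ A, R.coeff σ α * ⟪Λ + R.gamma, α⟫ ≤
      ∑ α ∈ A, R.coeff σ α * (-⟪α, α⟫ / 2) := by
    apply Finset.sum_le_sum
    intro α hα
    exact mul_le_mul_of_nonneg_left (mu_A_le Λ hw hreg hA hAneg hα)
      (R.pos_coeff_nonneg σ hσ α (hA hα))
  have hBeq : ∑ β ∈ B, R.coeff σ β * ⟪Λ + R.gamma, β⟫ =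
      ∑ β ∈ B, R.coeff σ β * (⟪β, β⟫ / 2) := by
    exact Finset.sum_congr rfl fun β hβ => by rw [mu_B_eq Λ hB hB0 hβ]
  have e1 : ∑ α ∈ A, R.coeff σ α * (-⟪α, α⟫ / 2) =
      -(1/2) * ∑ α ∈ A, R.coeff σ α * ⟪α, α⟫ := by
    rw [Finset.mul_sum]
    exact Finset.sum_congr rfl fun α _ => by ring
  have e2 : ∑ β ∈ B, R.coeff σ β * (⟪β, β⟫ / 2) =
      (1/2) * ∑ β ∈ B, R.coeff σ β * ⟪β, β⟫ := by
    rw [Finset.mul_sum]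
    exact Finset.sum_congr rfl fun β _ => by ring
  have h0 : ⟪Λ + R.gamma, σ⟫ ≤ 0 := by
    rw [hres]
    linarith [hAle, hBeq, e1, e2, hcond]
  exact step_bound Λ hw hreg hσ h0

lemma chain_lemma (Λ : V) (hw : R.IsWeight Λ) (hreg : R.IsRegular (Λ + R.gamma))
    {A B : Finset V} (hA : A ⊆ R.simple) (hB : B ⊆ R.simple)
    (hAneg : ∀ α ∈ A, ⟪Λ, α⟫ < 0) (hB0 : ∀ β ∈ B, ⟪Λ, β⟫ = 0) (L2 : ℝ) :
    ∀ N : ℕ, ∀ σ δ : V, σ ∈ R.pos → δ ∈ R.pos → R.cle σ δ →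
      ⟪Λ + R.gamma, σ⟫ ≤ -⟪σ, σ⟫ / 2 → L2 ≤ ⟪σ, σ⟫ →
      (∀ α ∈ R.support (δ - σ), (α ∈ A ∪ B) ∧ ⟪α, α⟫ = L2) →
      (R.pos.filter fun τ => R.cle σ τ ∧ R.cle τ δ).card = N →
      ⟪Λ + R.gamma, δ⟫ ≤ -⟪δ, δ⟫ / 2 ∧ L2 ≤ ⟪δ, δ⟫ := by
  intro N
  induction N using Nat.strong_induction_on with
  | _ N ih =>
    intro σ δ hσ hδ hcle hInv hL2σ hsupp hcard
    by_cases heq : δ = σ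
    · subst heq; exact ⟨hInv, hL2σ⟩
    have hsub_nn : ∀ α ∈ R.simple, 0 ≤ R.coeff (δ - σ) α := by
      intro α hα; rw [coeff_sub' _ _ hα]; linarith [hcle α hα]
    have hne0 : δ - σ ≠ 0 := sub_ne_zero.2 heq
    obtain ⟨α, hαs, hcpos, hipos⟩ := exists_pos_dir hne0 hsub_nn
    have hαsupp : α ∈ R.support (δ - σ) := Finset.mem_filter.2 ⟨hαs, ne_of_gt hcpos⟩
    obtain ⟨hαAB, hαL2⟩ := hsupp α hαsupp
    have hαp : α ∈ R.pos := R.simple_subset hαs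
    have hαr : α ∈ R.roots := R.pos_subset hαp
    have hαα : 0 < ⟪α, α⟫ := root_inner_self_pos hαr
    have hL2pos : 0 < L2 := hαL2 ▸ hαα
    have hμα : ⟪Λ + R.gamma, α⟫ ≤ L2 / 2 := by
      rcases Finset.mem_union.1 hαAB with h1 | h1
      · have := mu_A_le Λ hw hreg hA hAneg h1
        nlinarith
      · rw [mu_B_eq Λ hB hB0 h1, hαL2]
    obtain ⟨nσ, hnσ⟩ := coeff_int σ hσ α hαs
    obtain ⟨nδ, hnδ⟩ := coeff_int δ hδ α hαs
    have hclt : R.coeff σ α < R.coeff δ α := by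
      have h2 := hcpos; rw [coeff_sub' _ _ hαs] at h2; linarith
    have hint : R.coeff σ α + 1 ≤ R.coeff δ α := by
      rw [hnσ, hnδ] at hclt ⊢
      have h3 : nσ < nδ := by exact_mod_cast hclt
      have h4 : nσ + 1 ≤ nδ := h3
      exact_mod_cast h4
    have hiδσ : ⟪α, σ⟫ < ⟪α, δ⟫ := by
      have h2 := hipos
      rw [inner_sub_right] at h2
      linarith
    rcases lt_or_ge ⟪σ, α⟫ 0 with hcase | hcase
    · -- case (i): σ + α is a positive root, move up from σ
      have hnegσ : -σ ∈ R.roots := R.neg_mem σ (R.pos_subset hσ)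
      have hipσ : 0 < ⟪-σ, α⟫ := by rw [inner_neg_left]; linarith
      have hnsne : -σ ≠ α := by
        intro h
        have h2 : σ = -α := by rw [← h]; simp
        exact R.pos_neg_not α hαp (h2 ▸ hσ)
      have hτr : σ + α ∈ R.roots := by
        have h2 := R.neg_mem _ (sub_mem_of_inner_pos hnegσ hαr hipσ hnsne)
        rwa [show -(-σ - α) = σ + α by abel] at h2
      have hτcoeffα : R.coeff (σ + α) α = R.coeff σ α + 1 := by
        rw [coeff_add' _ _ hαs, coeff_simple hαs hαs, if_pos rfl]
      have hτp : σ + α ∈ R.pos := mem_pos_of_coeff_pos hτr hαs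
        (by rw [hτcoeffα]; linarith [R.pos_coeff_nonneg σ hσ α hαs])
      have hτcle : R.cle (σ + α) δ := by
        intro β hβ
        rw [coeff_add' _ _ hβ, coeff_simple hαs hβ]
        by_cases hba : β = α
        · rw [if_pos hba, hba]; linarith
        · rw [if_neg hba]; linarith [hcle β hβ]
      have hστcle : R.cle σ (σ + α) := by
        intro β hβ
        rw [coeff_add' _ _ hβ, coeff_simple hαs hβ]
        split <;> linarith
      have hμτ0 : ⟪Λ + R.gamma, σ + α⟫ ≤ 0 := by
        rw [inner_add_right]
        linarith
      have hμτ := step_bound Λ hw hreg hτp hμτ0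
      have hL2τ : L2 ≤ ⟪σ + α, σ + α⟫ :=
        le_trans (le_min hL2σ hαL2.ge) (min_le_sum_root (R.pos_subset hσ) hαr hτr)
      have hsupτ : ∀ β ∈ R.support (δ - (σ + α)), (β ∈ A ∪ B) ∧ ⟪β, β⟫ = L2 := by
        intro β hβ
        apply hsupp
        rw [RootSystemData.support, Finset.mem_filter] at hβ ⊢
        refine ⟨hβ.1, ?_⟩
        have h2 := hβ.2
        by_cases hba : β = α
        · rw [hba]; exact ne_of_gt hcpos
        · rw [show δ - (σ + α) = (δ - σ) - α by abel, coeff_sub' _ _ hβ.1,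
            coeff_simple hαs hβ.1, if_neg hba, sub_zero] at h2
          exact h2
      have hsubset : (R.pos.filter fun τ => R.cle (σ + α) τ ∧ R.cle τ δ) ⊆
          (R.pos.filter fun τ => R.cle σ τ ∧ R.cle τ δ) := by
        intro τ hτ
        simp only [Finset.mem_filter] at hτ ⊢
        exact ⟨hτ.1, fun β hβ => le_trans (hστcle β hβ) (hτ.2.1 β hβ), hτ.2.2⟩
      have hmem : σ ∈ R.pos.filter fun τ => R.cle σ τ ∧ R.cle τ δ := by
        simp only [Finset.mem_filter]
        exact ⟨hσ, fun β hβ => le_refl _, hcle⟩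
      have hnmem : σ ∉ R.pos.filter fun τ => R.cle (σ + α) τ ∧ R.cle τ δ := by
        simp only [Finset.mem_filter]
        rintro ⟨-, hc, -⟩
        have h2 := hc α hαs
        rw [hτcoeffα] at h2
        linarith
      have hlt : (R.pos.filter fun τ => R.cle (σ + α) τ ∧ R.cle τ δ).card < N := by
        rw [← hcard]
        exact Finset.card_lt_card ((Finset.ssubset_iff_of_subset hsubset).2 ⟨σ, hmem, hnmem⟩)
      exact ih _ hlt (σ + α) δ hτp hδ hτcle hμτ hL2τ hsupτ rfl
    · -- case (ii): δ - α is a positive root, move down from δ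
      have hδα : 0 < ⟪δ, α⟫ := by
        have h2 : ⟪α, σ⟫ = ⟪σ, α⟫ := real_inner_comm _ _
        have h3 : ⟪α, δ⟫ = ⟪δ, α⟫ := real_inner_comm _ _
        linarith
      have hδne : δ ≠ α := by
        intro h
        have hint' := hint
        rw [h, coeff_simple hαs hαs, if_pos rfl] at hint'
        have hz : ∀ β ∈ R.simple, R.coeff σ β = 0 := by
          intro β hβ
          have h2 := R.pos_coeff_nonneg σ hσ β hβ
          by_cases hba : β = α
          · rw [hba]; linarith [hint', R.pos_coeff_nonneg σ hσ α hαs]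
          · have h1 := hcle β hβ
            rw [h, coeff_simple hαs hβ, if_neg hba] at h1
            linarith
        exact R.root_ne_zero σ (R.pos_subset hσ) (eq_zero_of_coeff σ hz)
      have hδ'r : δ - α ∈ R.roots := sub_mem_of_inner_pos (R.pos_subset hδ) hαr hδα hδne
      have hcleδ' : R.cle σ (δ - α) := by
        intro β hβ
        rw [coeff_sub' _ _ hβ, coeff_simple hαs hβ]
        by_cases hba : β = α
        · rw [if_pos hba, hba]; linarith
        · rw [if_neg hba]; linarith [hcle β hβ]
      have hδ'p : δ - α ∈ R.pos := by
        rcases R.pos_or_neg _ hδ'r with h1 | h1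
        · exact h1
        · exfalso
          have hz : ∀ β ∈ R.simple, R.coeff σ β = 0 := by
            intro β hβ
            have h2 := R.pos_coeff_nonneg _ h1 β hβ
            rw [coeff_neg' _ hβ] at h2
            have h3 := hcleδ' β hβ
            have h4 := R.pos_coeff_nonneg σ hσ β hβ
            linarith
          exact R.root_ne_zero σ (R.pos_subset hσ) (eq_zero_of_coeff σ hz)
      have hsupδ' : ∀ β ∈ R.support ((δ - α) - σ), (β ∈ A ∪ B) ∧ ⟪β, β⟫ = L2 := by
        intro β hβ
        apply hsupp
        rw [RootSystemData.support, Finset.mem_filter] at hβ ⊢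
        refine ⟨hβ.1, ?_⟩
        have h2 := hβ.2
        by_cases hba : β = α
        · rw [hba]; exact ne_of_gt hcpos
        · rw [show (δ - α) - σ = (δ - σ) - α by abel, coeff_sub' _ _ hβ.1,
            coeff_simple hαs hβ.1, if_neg hba, sub_zero] at h2
          exact h2
      have hsubset : (R.pos.filter fun τ => R.cle σ τ ∧ R.cle τ (δ - α)) ⊆
          (R.pos.filter fun τ => R.cle σ τ ∧ R.cle τ δ) := by
        intro τ hτ
        simp only [Finset.mem_filter] at hτ ⊢
        refine ⟨hτ.1, hτ.2.1, fun β hβ => ?_⟩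
        have h2 := hτ.2.2 β hβ
        rw [coeff_sub' _ _ hβ, coeff_simple hαs hβ] at h2
        split at h2 <;> linarith
      have hmem : δ ∈ R.pos.filter fun τ => R.cle σ τ ∧ R.cle τ δ := by
        simp only [Finset.mem_filter]
        exact ⟨hδ, hcle, fun β hβ => le_refl _⟩
      have hnmem : δ ∉ R.pos.filter fun τ => R.cle σ τ ∧ R.cle τ (δ - α) := by
        simp only [Finset.mem_filter]
        rintro ⟨-, -, hc⟩
        have h2 := hc α hαs
        rw [coeff_sub' _ _ hαs, coeff_simple hαs hαs, if_pos rfl] at h2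
        linarith
      have hlt : (R.pos.filter fun τ => R.cle σ τ ∧ R.cle τ (δ - α)).card < N := by
        rw [← hcard]
        exact Finset.card_lt_card ((Finset.ssubset_iff_of_subset hsubset).2 ⟨δ, hmem, hnmem⟩)
      obtain ⟨ih1, ih2⟩ := ih _ hlt σ (δ - α) hσ hδ'p hcleδ' hInv hL2σ hsupδ' rfl
      have hμδ0 : ⟪Λ + R.gamma, δ⟫ ≤ 0 := by
        have hsplit : ⟪Λ + R.gamma, δ⟫ = ⟪Λ + R.gamma, δ - α⟫ + ⟪Λ + R.gamma, α⟫ := by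
          rw [← inner_add_right]
          congr 1
          abel
        rw [hsplit]
        linarith
      refine ⟨step_bound Λ hw hreg hδ hμδ0, ?_⟩
      have hsumr : (δ - α) + α ∈ R.roots := by
        rw [sub_add_cancel]; exact R.pos_subset hδ
      have hmin := min_le_sum_root hδ'r hαr hsumr
      rw [sub_add_cancel] at hmin
      exact le_trans (le_min ih2 hαL2.ge) hmin
end RootSystemData


/-- If `Λ` is a weight with `(Λ,α) < 0` for `α ∈ A`, `(Λ,β) = 0` for `β ∈ B`, and `Λ + γ`
is regular, then the number of positive roots `δ` with `(Λ + γ, δ) < 0` (the index of the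
regular weight `Λ + γ`) is at least `ℓ(A,B)`, the number of significant `(A,B)`-roots. -/
theorem ell_le_index
    {V : Type*} [NormedAddCommGroup V] [InnerProductSpace ℝ V]
    (R : RootSystemData V)
    (A B : Finset V) (hA : A ⊆ R.simple) (hB : B ⊆ R.simple) (hAB : Disjoint A B)
    (Λ : V) (hw : R.IsWeight Λ)
    (hAneg : ∀ α ∈ A, ⟪Λ, α⟫ < 0) (hB0 : ∀ β ∈ B, ⟪Λ, β⟫ = 0)
    (hreg : R.IsRegular (Λ + R.gamma)) :
    R.ell A B ≤ (R.pos.filter fun δ => ⟪Λ + R.gamma, δ⟫ < 0).card := by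
  rw [RootSystemData.ell]
  apply Finset.card_le_card
  intro δ hδ
  rw [Finset.mem_filter] at hδ ⊢
  obtain ⟨hpos, hsig⟩ := hδ
  refine ⟨hpos, ?_⟩
  obtain ⟨⟨-, hsupδ, -⟩, σ, ⟨hσpos, hsupσ, -⟩, hcle, hSBA, hsame, hlen⟩ := hsig
  have hInv : ⟪Λ + R.gamma, σ⟫ ≤ -⟪σ, σ⟫ / 2 :=
    RootSystemData.sigma_bound Λ hw hreg hA hB hAB hAneg hB0 hσpos hsupσ hSBA
  have hσσ : 0 < ⟪σ, σ⟫ := RootSystemData.root_inner_self_pos (R.pos_subset hσpos)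
  have hδδ : 0 < ⟪δ, δ⟫ := RootSystemData.root_inner_self_pos (R.pos_subset hpos)
  by_cases hempty : R.support (δ - σ) = ∅
  · have hds : δ - σ = 0 := by
      apply RootSystemData.eq_zero_of_coeff
      intro β hβ
      by_contra hc
      have hmem : β ∈ R.support (δ - σ) := Finset.mem_filter.2 ⟨hβ, hc⟩
      rw [hempty] at hmem
      simp at hmem
    have hδσ : δ = σ := by
      have := sub_eq_zero.1 hds
      exact this
    rw [hδσ]
    linarith
  · obtain ⟨α₀, hα₀⟩ := Finset.nonempty_iff_ne_empty.2 hempty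
    have hα₀s : α₀ ∈ R.simple := (Finset.mem_filter.1 hα₀).1
    have hL2σ : ⟪α₀, α₀⟫ ≤ ⟪σ, σ⟫ := by
      have h1 := hlen α₀ hα₀
      rw [real_inner_self_eq_norm_sq, real_inner_self_eq_norm_sq]
      exact pow_le_pow_left₀ (norm_nonneg _) h1 2
    have hsupcond : ∀ β ∈ R.support (δ - σ), (β ∈ A ∪ B) ∧ ⟪β, β⟫ = ⟪α₀, α₀⟫ := by
      intro β hβ
      have hβs : β ∈ R.simple := (Finset.mem_filter.1 hβ).1
      have hβne : R.coeff (δ - σ) β ≠ 0 := (Finset.mem_filter.1 hβ).2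
      constructor
      · apply hsupδ
        rw [RootSystemData.support, Finset.mem_filter]
        refine ⟨hβs, fun hc => ?_⟩
        have h1 := hcle β hβs
        have h2 := R.pos_coeff_nonneg σ hσpos β hβs
        rw [hc] at h1
        have h3 : R.coeff σ β = 0 := le_antisymm h1 h2
        apply hβne
        rw [RootSystemData.coeff_sub' _ _ hβs, hc, h3, sub_zero]
      · have h1 := hsame β hβ α₀ hα₀
        rw [real_inner_self_eq_norm_sq, h1, ← real_inner_self_eq_norm_sq]
    have hchain := (RootSystemData.chain_lemma Λ hw hreg hA hB hAneg hB0 ⟪α₀, α₀⟫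
      _ σ δ hσpos hpos hcle hInv hL2σ hsupcond rfl).1
    linarith
end

section
/- Let α ∈ Π be a simple root, let B ⊆ Π \ {α} be nonempty, and suppose there exists β ∈ B with (α,β) ≠ 0. Then ℓ({α},B) ≥ 2, i.e., there exist at least two distinct significant ({α},B)-roots. -/
open scoped RealInnerProductSpace
open scoped Classical

namespace RootSystemData

variable {V : Type*} [NormedAddCommGroup V] [InnerProductSpace ℝ V]

lemma coeff_unique (R : RootSystemData V) {ξ : V} {f : V → ℝ}
    (h : ξ = ∑ γ ∈ R.simple, f γ • γ) :
    ∀ γ ∈ R.simple, R.coeff ξ γ = f γ := by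
  intro γ hγ
  have hsum : ∑ γ ∈ R.simple, (R.coeff ξ γ - f γ) • γ = 0 := by
    have h2 := R.coeff_spec ξ
    calc ∑ γ ∈ R.simple, (R.coeff ξ γ - f γ) • γ
        = (∑ γ ∈ R.simple, R.coeff ξ γ • γ) - ∑ γ ∈ R.simple, f γ • γ := by
          rw [← Finset.sum_sub_distrib]
          exact Finset.sum_congr rfl fun x _ => sub_smul _ _ _
      _ = ξ - ξ := by rw [← h2, ← h]
      _ = 0 := sub_self _
  have hsum' : ∑ x : R.simple, (R.coeff ξ (x : V) - f (x : V)) • (x : V) = 0 := by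
    rw [Finset.sum_coe_sort R.simple (fun γ => (R.coeff ξ γ - f γ) • γ)]
    exact hsum
  have h0 := linearIndependent_iff'.mp R.linearIndependent Finset.univ
      (fun x : R.simple => R.coeff ξ (x : V) - f (x : V)) hsum' ⟨γ, hγ⟩ (Finset.mem_univ _)
  have : R.coeff ξ γ - f γ = 0 := h0
  linarith

lemma coeff_zero' (R : RootSystemData V) : ∀ γ ∈ R.simple, R.coeff 0 γ = 0 := by
  have := R.coeff_unique (ξ := 0) (f := fun _ => (0 : ℝ)) (by simp)
  simpa using this

lemma coeff_combo (R : RootSystemData V) {a b : V} (ha : a ∈ R.simple) (hb : b ∈ R.simple)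
    (hab : a ≠ b) (c d : ℝ) :
    ∀ γ ∈ R.simple, R.coeff (c • a + d • b) γ =
      (if γ = a then c else 0) + (if γ = b then d else 0) := by
  apply R.coeff_unique
  have key : ∀ γ ∈ R.simple,
      ((if γ = a then c else 0) + (if γ = b then d else 0)) • γ
      = (if γ = a then c • a else 0) + (if γ = b then d • b else 0) := by
    intro γ _
    rcases eq_or_ne γ a with h1 | h1
    · subst h1; simp [hab]
    · rcases eq_or_ne γ b with h2 | h2
      · subst h2; simp [h1]
      · simp [h1, h2]
  rw [Finset.sum_congr rfl key, Finset.sum_add_distrib, Finset.sum_ite_eq' R.simple a,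
    Finset.sum_ite_eq' R.simple b]
  simp [ha, hb]

lemma not_root_mixed (R : RootSystemData V) {a b : V} (ha : a ∈ R.simple) (hb : b ∈ R.simple)
    (hab : a ≠ b) {c d : ℝ} (hc : c < 0) (hd : 0 < d) : c • a + d • b ∉ R.roots := by
  intro hmem
  rcases R.pos_or_neg _ hmem with hp | hp
  · have h1 := R.pos_coeff_nonneg _ hp a ha
    rw [R.coeff_combo ha hb hab c d a ha] at h1
    rw [if_pos rfl, if_neg hab] at h1
    linarith
  · have hneg : -(c • a + d • b) = (-c) • a + (-d) • b := by module
    rw [hneg] at hp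
    have h1 := R.pos_coeff_nonneg _ hp b hb
    rw [R.coeff_combo ha hb hab (-c) (-d) b hb] at h1
    rw [if_neg (Ne.symm hab), if_pos rfl] at h1
    linarith

lemma inner_pos_aux (R : RootSystemData V) (x : V) (hx : x ≠ 0) : (0 : ℝ) < ⟪x, x⟫ :=
  lt_of_le_of_ne real_inner_self_nonneg (Ne.symm (inner_self_ne_zero.mpr hx))

lemma support_zero' (R : RootSystemData V) : R.support 0 = ∅ := by
  rw [support, Finset.filter_eq_empty_iff]
  intro γ hγ
  simpa using R.coeff_zero' γ hγ

end RootSystemData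


/-- If `B ⊆ Π \\ {α}` is nonempty and adjacent to the simple root `α` (some `β ∈ B` has
`(α,β) ≠ 0`), then there are at least two significant `({α},B)`-roots: `ℓ({α},B) ≥ 2`. -/
theorem two_le_ell_of_adjacent
    {V : Type*} [NormedAddCommGroup V] [InnerProductSpace ℝ V]
    (R : RootSystemData V)
    (α : V) (hα : α ∈ R.simple) (B : Finset V) (hB : B ⊆ R.simple)
    (hαB : α ∉ B) (hBne : B.Nonempty) (hadj : ∃ β ∈ B, ⟪α, β⟫ ≠ 0) :
    2 ≤ R.ell {α} B := by
  classical
  obtain ⟨β, hβB, hαβ⟩ := hadj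
  have hβs : β ∈ R.simple := hB hβB
  have hαne : α ≠ β := fun h => hαB (h ▸ hβB)
  have hαpos : α ∈ R.pos := R.simple_subset hα
  have hαroot : α ∈ R.roots := R.pos_subset hαpos
  have hβroot : β ∈ R.roots := R.pos_subset (R.simple_subset hβs)
  have hαα : (0 : ℝ) < ⟪α, α⟫ := R.inner_pos_aux α (R.root_ne_zero α hαroot)
  have hββ : (0 : ℝ) ≤ ⟪β, β⟫ := real_inner_self_nonneg
  -- coefficients of α and of combinations
  have hcoeffα : ∀ γ ∈ R.simple, R.coeff α γ = if γ = α then 1 else 0 := by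
    have := R.coeff_combo hα hβs hαne 1 0
    intro γ hγ
    have h2 := this γ hγ
    simpa using h2
  -- (α, β) < 0
  have hip : ⟪α, β⟫ < 0 := by
    rcases lt_or_gt_of_ne hαβ with h | h
    · exact h
    · exfalso
      have hroot := R.reflect_mem β hβroot α hαroot
      have hrw : β - (2 * ⟪β, α⟫ / ⟪α, α⟫) • α
          = (-(2 * ⟪β, α⟫ / ⟪α, α⟫)) • α + (1 : ℝ) • β := by module
      rw [hrw] at hroot
      have hba : (0 : ℝ) < ⟪β, α⟫ := by rwa [real_inner_comm]
      have hcneg : -(2 * ⟪β, α⟫ / ⟪α, α⟫) < 0 := by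
        have : (0 : ℝ) < 2 * ⟪β, α⟫ / ⟪α, α⟫ := by positivity
        linarith
      exact R.not_root_mixed hα hβs hαne hcneg one_pos hroot
  obtain ⟨m, hm⟩ := R.crystallographic β hβroot α hαroot
  obtain ⟨k, hk⟩ := R.crystallographic α hαroot β hβroot
  have hβα : ⟪β, α⟫ < 0 := by rwa [real_inner_comm]
  have hmneg : (m : ℝ) < 0 := by
    rw [← hm]
    have : 2 * ⟪β, α⟫ < 0 := by linarith
    exact div_neg_of_neg_of_pos this hαα
  have hm1 : (m : ℝ) ≤ -1 := by
    have h1 : m < 0 := by exact_mod_cast hmneg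
    have h2 : m ≤ -1 := by omega
    exact_mod_cast h2
  set n : ℝ := -(m : ℝ) with hn
  have hn1 : (1 : ℝ) ≤ n := by simp only [hn]; linarith
  have hnpos : (0 : ℝ) < n := by linarith
  -- δ = n • α + β is a root
  have hroot := R.reflect_mem β hβroot α hαroot
  rw [hm] at hroot
  have hδrw : β - (m : ℝ) • α = n • α + (1 : ℝ) • β := by rw [hn]; module
  rw [hδrw] at hroot
  set δ : V := n • α + (1 : ℝ) • β with hδdef
  have hcoeffδ : ∀ γ ∈ R.simple, R.coeff δ γ =
      (if γ = α then n else 0) + (if γ = β then 1 else 0) :=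
    R.coeff_combo hα hβs hαne n 1
  -- δ is positive
  have hδpos : δ ∈ R.pos := by
    rcases R.pos_or_neg _ hroot with h | h
    · exact h
    · exfalso
      have hneg : -δ = (-n) • α + (-1 : ℝ) • β := by rw [hδdef]; module
      rw [hneg] at h
      have h1 := R.pos_coeff_nonneg _ h α hα
      rw [R.coeff_combo hα hβs hαne (-n) (-1) α hα, if_pos rfl, if_neg hαne] at h1
      linarith
  -- key length inequality : ⟪β, β⟫ ≤ n * ⟪α, α⟫
  have hkneg : (k : ℝ) < 0 := by
    rw [← hk]
    have hββ' : (0 : ℝ) < ⟪β, β⟫ := R.inner_pos_aux β (R.root_ne_zero β hβroot)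
    have : 2 * ⟪α, β⟫ < 0 := by linarith
    exact div_neg_of_neg_of_pos this hββ'
  have hk1 : (k : ℝ) ≤ -1 := by
    have h1 : k < 0 := by exact_mod_cast hkneg
    have h2 : k ≤ -1 := by omega
    exact_mod_cast h2
  have hββ' : (0 : ℝ) < ⟪β, β⟫ := R.inner_pos_aux β (R.root_ne_zero β hβroot)
  have hkey : ⟪β, β⟫ ≤ n * ⟪α, α⟫ := by
    have e1 : (k : ℝ) * ⟪β, β⟫ = 2 * ⟪α, β⟫ := by
      field_simp at hk
      linarith [hk]
    have e2 : (m : ℝ) * ⟪α, α⟫ = 2 * ⟪β, α⟫ := by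
      field_simp at hm
      linarith [hm]
    have e3 : (k : ℝ) * ⟪β, β⟫ = (m : ℝ) * ⟪α, α⟫ := by
      rw [e1, e2, real_inner_comm]
    have : ⟪β, β⟫ ≤ (-(k : ℝ)) * ⟪β, β⟫ := by nlinarith
    calc ⟪β, β⟫ ≤ (-(k : ℝ)) * ⟪β, β⟫ := this
      _ = n * ⟪α, α⟫ := by rw [hn]; nlinarith [e3]
  -- α is significant
  have hABα : R.IsABRoot {α} B α := by
    refine ⟨hαpos, ?_, α, Finset.mem_singleton_self α, ?_⟩
    · intro γ hγ
      rw [RootSystemData.support, Finset.mem_filter] at hγ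
      obtain ⟨hγs, hγne⟩ := hγ
      rw [hcoeffα γ hγs] at hγne
      rcases eq_or_ne γ α with h | h
      · exact Finset.mem_union_left _ (Finset.mem_singleton.mpr h)
      · simp [h] at hγne
    · rw [hcoeffα α hα, if_pos rfl]; norm_num
  have hsigα : R.IsSignificant {α} B α := by
    refine ⟨hABα, α, hABα, fun γ _ => le_refl _, ?_, ?_, ?_⟩
    · have hz : ∀ γ ∈ B, R.coeff α γ * ⟪γ, γ⟫ = 0 := by
        intro γ hγ
        rw [hcoeffα γ (hB hγ), if_neg (by rintro rfl; exact hαB hγ), zero_mul]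
      rw [Finset.sum_congr rfl hz, Finset.sum_const_zero, Finset.sum_singleton,
        hcoeffα α hα, if_pos rfl, one_mul]
      positivity
    · rw [sub_self, R.support_zero']; intro x hx; exact absurd hx (Finset.notMem_empty x)
    · rw [sub_self, R.support_zero']; intro x hx; exact absurd hx (Finset.notMem_empty x)
  -- δ is significant
  have hABδ : R.IsABRoot {α} B δ := by
    refine ⟨hδpos, ?_, α, Finset.mem_singleton_self α, ?_⟩
    · intro γ hγ
      rw [RootSystemData.support, Finset.mem_filter] at hγ
      obtain ⟨hγs, hγne⟩ := hγ
      rw [hcoeffδ γ hγs] at hγne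
      rcases eq_or_ne γ α with h | h
      · exact Finset.mem_union_left _ (Finset.mem_singleton.mpr h)
      · rcases eq_or_ne γ β with h2 | h2
        · exact Finset.mem_union_right _ (h2 ▸ hβB)
        · simp [h, h2] at hγne
    · rw [hcoeffδ α hα, if_pos rfl, if_neg hαne]; linarith
  have hsigδ : R.IsSignificant {α} B δ := by
    refine ⟨hABδ, δ, hABδ, fun γ _ => le_refl _, ?_, ?_, ?_⟩
    · have hz : ∀ γ ∈ B, R.coeff δ γ * ⟪γ, γ⟫ = if γ = β then ⟪β, β⟫ else 0 := by
        intro γ hγ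
        rw [hcoeffδ γ (hB hγ), if_neg (by rintro rfl; exact hαB hγ)]
        rcases eq_or_ne γ β with h | h
        · subst h; simp
        · simp [h]
      rw [Finset.sum_congr rfl hz, Finset.sum_ite_eq' B β, if_pos hβB,
        Finset.sum_singleton, hcoeffδ α hα, if_pos rfl, if_neg hαne, add_zero]
      exact hkey
    · rw [sub_self, R.support_zero']; intro x hx; exact absurd hx (Finset.notMem_empty x)
    · rw [sub_self, R.support_zero']; intro x hx; exact absurd hx (Finset.notMem_empty x)
  -- conclude
  have hαδne : α ≠ δ := by
    intro h
    have h1 := hcoeffα β hβs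
    have h2 := hcoeffδ β hβs
    rw [← h] at h2
    rw [h1, if_neg (Ne.symm hαne)] at h2
    rw [if_neg (Ne.symm hαne), if_pos rfl] at h2
    norm_num at h2
  have hmemα : α ∈ R.pos.filter fun x => R.IsSignificant {α} B x :=
    Finset.mem_filter.mpr ⟨hαpos, hsigα⟩
  have hmemδ : δ ∈ R.pos.filter fun x => R.IsSignificant {α} B x :=
    Finset.mem_filter.mpr ⟨hδpos, hsigδ⟩
  rw [RootSystemData.ell]
  exact Finset.one_lt_card.mpr ⟨α, hmemα, δ, hmemδ, hαδne⟩
end
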